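/- arXiv:1504.00596 — 4 statements merged into one kernel-verified Lean document; each statement's English description precedes it below -/
import Mathlib

section
/- For c ≥ 2 and r ≥ 1, let T_{c,r} be the tree consisting of (r+1)(c−1)^{r+1} paths, each on r + 1 vertices, all sharing a common first vertex (equivalently, a spider with (r+1)(c−1)^{r+1} legs each of length r). Then M_c(T_{c,r}) = (c − 1)·r. -/
open Classical SimpleGraph

/-- The spanning subgraph of `G` whose edges join vertices of equal colour under `ω`.
Its connected components are the monochromatic components of `(G, ω)`. -/
def monoSubgraph {V C : Type*} (G : SimpleGraph V) (ω : V → C) : SimpleGraph V where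
  Adj u v := G.Adj u v ∧ ω u = ω v
  symm := ⟨fun u v h => ⟨h.1.symm, h.2.symm⟩⟩
  loopless := ⟨fun u h => G.irrefl h.1⟩

/-- A single flooding move `(v, d)`: every vertex in the monochromatic component of `v`
receives colour `d`. -/
noncomputable def floodMove {V C : Type*} (G : SimpleGraph V) (ω : V → C) (v : V) (d : C) :
    V → C :=
  fun u => if (monoSubgraph G ω).Reachable v u then d else ω u

/-- Apply a sequence of flooding moves, in order. -/
noncomputable def floodSeq {V C : Type*} (G : SimpleGraph V) :
    List (V × C) → (V → C) → (V → C)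
  | [], ω => ω
  | m :: ms, ω => floodSeq G ms (floodMove G ω m.1 m.2)

/-- `m(G, ω, d)`: the minimum number of moves needed to give every vertex colour `d`,
starting from the colouring `ω`. -/
noncomputable def floodCost {V C : Type*} (G : SimpleGraph V) (ω : V → C) (d : C) : ℕ :=
  sInf {k | ∃ ms : List (V × C), ms.length = k ∧ ∀ v, floodSeq G ms ω v = d}

/-- `m(G, ω)`: the minimum over target colours `d ∈ C` of `m(G, ω, d)`. -/
noncomputable def floodCostMin {V C : Type*} (G : SimpleGraph V) (ω : V → C) : ℕ :=
  sInf {k | ∃ d : C, floodCost G ω d = k}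

/-- `M_c(G)`: the maximum of `m(G, ω)` over all surjective colourings
`ω : V(G) → {1, …, c}`. -/
noncomputable def maxFloodCost {V : Type*} (c : ℕ) (G : SimpleGraph V) : ℕ :=
  sSup {k | ∃ ω : V → Fin c, Function.Surjective ω ∧ floodCostMin G ω = k}

/-- The spider with `L` legs each of length `r`: a common centre vertex `none`, and leg
vertices `some (i, j)` — the `(j+1)`-st vertex of the `i`-th leg, at distance `j + 1`
from the centre. -/
def spider (L r : ℕ) : SimpleGraph (Option (Fin L × Fin r)) :=
  SimpleGraph.fromRel (fun u v =>
    match u, v with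
    | none, some (_, j) => (j : ℕ) = 0
    | some (i, j), some (i', j') => i = i' ∧ (j : ℕ) + 1 = (j' : ℕ)
    | _, _ => False)

/-!
Playing at the centre every colour other than the centre's current one absorbs the next layer
of the spider, so `(c - 1) r` moves at the centre flood any colouring.

Conversely, on a leg that no move touches a vertex can only be recoloured through the centre,
after its predecessor and at a moment when the centre has its colour; hence the word read along
such a leg is a subsequence of the colours taken by the centre. The hard colouring puts every
word of length `r` with distinct consecutive colours on more legs than there are moves, so the
centre's colour sequence contains all of them as subsequences, and a greedy adversary choosing
each next letter as late as possible shows it has length at least `(c - 1) r`.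
-/

open scoped List
open Finset

section Flooding

variable {V C : Type*} {G : SimpleGraph V} {ω : V → C}

theorem eq_of_reachable_monoSubgraph {u v : V} (h : (monoSubgraph G ω).Reachable u v) :
    ω u = ω v := by
  obtain ⟨p⟩ := h
  induction p with
  | nil => rfl
  | cons h _ ih => exact h.2.trans ih

theorem eq_of_mem_support_monoSubgraph {u v z : V} (p : (monoSubgraph G ω).Walk u v)
    (hz : z ∈ p.support) : ω z = ω v :=
  eq_of_reachable_monoSubgraph ⟨p.dropUntil z hz⟩

theorem floodMove_of_reachable {v u : V} {d : C} (h : (monoSubgraph G ω).Reachable v u) :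
    floodMove G ω v d u = d :=
  if_pos h

theorem floodMove_of_not_reachable {v u : V} {d : C}
    (h : ¬(monoSubgraph G ω).Reachable v u) : floodMove G ω v d u = ω u :=
  if_neg h

theorem reachable_floodMove {v u : V} {d : C} (h : (monoSubgraph G ω).Reachable v u) :
    (monoSubgraph G (floodMove G ω v d)).Reachable v u := by
  obtain ⟨p⟩ := h
  suffices ∀ {a b : V} (q : (monoSubgraph G ω).Walk a b), (monoSubgraph G ω).Reachable v a →
      (monoSubgraph G (floodMove G ω v d)).Reachable a b from this p (Reachable.refl v)
  intro a b q ha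
  induction q with
  | nil => rfl
  | @cons x y z hxy q ih =>
    have hy : (monoSubgraph G ω).Reachable v y := ha.trans hxy.reachable
    have hxy' : (monoSubgraph G (floodMove G ω v d)).Adj x y :=
      ⟨hxy.1, by rw [floodMove_of_reachable ha, floodMove_of_reachable hy]⟩
    exact hxy'.reachable.trans (ih hy)

theorem reachable_of_adj_of_eq {v w u : V} (hw : (monoSubgraph G ω).Reachable v w)
    (hwu : G.Adj w u) (hu : ω u = ω v) : (monoSubgraph G ω).Reachable v u :=
  hw.trans (Adj.reachable ⟨hwu, (eq_of_reachable_monoSubgraph hw).symm.trans hu.symm⟩)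

theorem reachable_floodMove_of_adj {v w u : V} {d : C} (hw : (monoSubgraph G ω).Reachable v w)
    (hwu : G.Adj w u) (hu : ω u = d) : (monoSubgraph G (floodMove G ω v d)).Reachable v u := by
  refine reachable_of_adj_of_eq (reachable_floodMove hw) hwu ?_
  rw [floodMove_of_reachable (Reachable.refl v)]
  unfold floodMove
  split_ifs <;> simp [hu]

theorem floodSeq_append (ms ms' : List (V × C)) (ω : V → C) :
    floodSeq G (ms ++ ms') ω = floodSeq G ms' (floodSeq G ms ω) := by
  induction ms generalizing ω with
  | nil => rfl
  | cons m ms ih => exact ih _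

theorem reachable_floodSeq_map {v u : V} (s : List C) (h : (monoSubgraph G ω).Reachable v u) :
    (monoSubgraph G (floodSeq G (s.map (v, ·)) ω)).Reachable v u := by
  induction s generalizing ω with
  | nil => exact h
  | cons d s ih => exact ih (reachable_floodMove h)

theorem reachable_floodSeq_map_of_adj {v w u : V} (s : List C)
    (hw : (monoSubgraph G ω).Reachable v w) (hwu : G.Adj w u) (hu : ω u = ω v ∨ ω u ∈ s) :
    (monoSubgraph G (floodSeq G (s.map (v, ·)) ω)).Reachable v u := by
  induction s generalizing ω with
  | nil => exact reachable_of_adj_of_eq hw hwu (hu.resolve_right List.not_mem_nil)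
  | cons d s ih =>
    by_cases hvu : (monoSubgraph G ω).Reachable v u
    · exact reachable_floodSeq_map (d :: s) hvu
    by_cases hd : ω u = d
    · exact reachable_floodSeq_map s (reachable_floodMove_of_adj hw hwu hd)
    refine ih (reachable_floodMove hw) (Or.inr ?_)
    rw [floodMove_of_not_reachable hvu]
    simpa [hd, mt (reachable_of_adj_of_eq hw hwu) hvu] using hu

end Flooding

section Cost

variable {V C : Type*} {G : SimpleGraph V} {ω : V → C}

theorem exists_floodSeq_reachable [Fintype C] [DecidableEq C] (ω : V → C) (v : V) (n : ℕ) :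
    ∃ ms : List (V × C), ms.length = (Fintype.card C - 1) * n ∧
      ∀ u (p : G.Walk u v), p.length ≤ n → (monoSubgraph G (floodSeq G ms ω)).Reachable v u := by
  induction n with
  | zero =>
    refine ⟨[], rfl, fun u p hp => ?_⟩
    obtain rfl := p.eq_of_length_eq_zero (Nat.le_zero.mp hp)
    rfl
  | succ n ih =>
    obtain ⟨ms, hlen, hms⟩ := ih
    set x := floodSeq G ms ω v
    refine ⟨ms ++ (Finset.univ.erase x).toList.map (v, ·), ?_, fun u p hp => ?_⟩
    · simp [hlen, Finset.card_erase_of_mem, Nat.mul_succ]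
    rw [floodSeq_append]
    cases p with
    | nil => rfl
    | cons hadj q =>
      refine reachable_floodSeq_map_of_adj _ (hms _ q (by simp at hp; omega)) hadj.symm ?_
      exact or_iff_not_imp_left.2 fun h => by simpa using h

theorem floodCostMin_le_of_floodSeq {ms : List (V × C)} {d : C}
    (h : ∀ u, floodSeq G ms ω u = d) : floodCostMin G ω ≤ ms.length :=
  calc floodCostMin G ω ≤ floodCost G ω d := Nat.sInf_le ⟨d, rfl⟩
    _ ≤ ms.length := Nat.sInf_le ⟨ms, rfl, h⟩

theorem floodCostMin_le [Fintype C] [DecidableEq C] (ω : V → C) {v : V} {n : ℕ}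
    (h : ∀ u, ∃ p : G.Walk u v, p.length ≤ n) :
    floodCostMin G ω ≤ (Fintype.card C - 1) * n := by
  obtain ⟨ms, hlen, hms⟩ := exists_floodSeq_reachable ω v n
  rw [← hlen]
  refine floodCostMin_le_of_floodSeq (d := floodSeq G ms ω v) fun u => ?_
  obtain ⟨p, hp⟩ := h u
  exact (eq_of_reachable_monoSubgraph (hms u p hp)).symm

theorem exists_floodSeq_eq [Fintype C] [DecidableEq C] (ω : V → C) {v : V} {n : ℕ}
    (h : ∀ u, ∃ p : G.Walk u v, p.length ≤ n) (d : C) :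
    ∃ ms : List (V × C), ∀ u, floodSeq G ms ω u = d := by
  obtain ⟨ms, -, hms⟩ := exists_floodSeq_reachable ω v n
  refine ⟨ms ++ [(v, d)], fun u => ?_⟩
  obtain ⟨p, hp⟩ := h u
  rw [floodSeq_append]
  exact floodMove_of_reachable (hms u p hp)

theorem le_floodCostMin [Nonempty C] {N : ℕ}
    (hfeas : ∀ d, ∃ ms : List (V × C), ∀ u, floodSeq G ms ω u = d)
    (h : ∀ ms d, (∀ u, floodSeq G ms ω u = d) → N ≤ ms.length) : N ≤ floodCostMin G ω := by
  refine le_csInf ⟨_, Classical.arbitrary C, rfl⟩ ?_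
  rintro _ ⟨d, rfl⟩
  obtain ⟨ms, hms⟩ := hfeas d
  refine le_csInf ⟨_, ms, rfl, hms⟩ ?_
  rintro _ ⟨ms', rfl, hms'⟩
  exact h ms' d hms'

noncomputable def floodTrace (G : SimpleGraph V) (z : V) : List (V × C) → (V → C) → List C
  | [], ω => [ω z]
  | m :: ms, ω => ω z :: floodTrace G z ms (floodMove G ω m.1 m.2)

theorem length_floodTrace (z : V) (ms : List (V × C)) (ω : V → C) :
    (floodTrace G z ms ω).length = ms.length + 1 := by
  induction ms generalizing ω with
  | nil => rfl
  | cons m ms ih => simp [floodTrace, ih]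

theorem floodTrace_eq_cons (z : V) (ms : List (V × C)) (ω : V → C) :
    floodTrace G z ms ω = ω z :: (floodTrace G z ms ω).tail := by
  cases ms <;> rfl

end Cost

namespace List

variable {C : Type*}

theorem sublist_of_sublist_cons_of_isChain_ne {b : C} {w s : List C}
    (hw : (b :: w).IsChain (· ≠ ·)) (h : w <+ b :: s) : w <+ s := by
  rcases sublist_cons_iff.1 h with h | ⟨w', rfl, -⟩
  · exact h
  · exact absurd rfl (isChain_cons_cons.1 hw).1

theorem sublist_singleton_of_isChain_ne {d : C} {l : List C} (hl : l.IsChain (· ≠ ·))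
    (hd : ∀ x ∈ l, x = d) : l <+ [d] := by
  match l, hl with
  | [], _ => exact nil_sublist _
  | [a], _ => simp [hd a mem_cons_self]
  | a :: b :: _, hl => exact absurd ((hd a (by simp)).trans (hd b (by simp)).symm) hl.rel

theorem exists_isChain_ne [Nontrivial C] (b : C) (n : ℕ) :
    ∃ w : List C, w.length = n ∧ (b :: w).IsChain (· ≠ ·) := by
  induction n generalizing b with
  | zero => exact ⟨[], rfl, isChain_singleton b⟩
  | succ n ih =>
    obtain ⟨a, ha⟩ := exists_ne b
    obtain ⟨w, hw, hchain⟩ := ih a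
    exact ⟨a :: w, by simp [hw], hchain.cons_cons ha.symm⟩

variable [DecidableEq C]

theorem sublist_drop_idxOf {a : C} {w s : List C} (h : a :: w <+ s) :
    w <+ s.drop (s.idxOf a + 1) := by
  induction s with
  | nil => simp at h
  | cons x s ih =>
    by_cases hx : x = a
    · subst hx
      simpa using h
    · rw [idxOf_cons_ne _ hx]
      refine ih ?_
      rcases sublist_cons_iff.1 h with h | ⟨w', hw', -⟩
      · exact h
      · exact absurd (cons_eq_cons.1 hw').1.symm hx

theorem exists_card_le_idxOf_add_one {A : Finset C} (hA : A.Nonempty) {s : List C}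
    (hs : ∀ a ∈ A, a ∈ s) : ∃ a ∈ A, A.card ≤ s.idxOf a + 1 := by
  obtain ⟨a, ha, hmax⟩ := A.exists_max_image (s.idxOf ·) hA
  refine ⟨a, ha, ?_⟩
  simpa using Finset.card_le_card_of_injOn (s.idxOf ·) (t := Finset.range (s.idxOf a + 1))
    (fun b hb => by simpa [Nat.lt_succ_iff] using hmax b hb)
    (fun b hb b' _ h => (idxOf_inj (hs b hb)).1 h)

/-- The letter `a ≠ b` whose first occurrence in `s` is latest sits at position at least
`card C - 2`, and the words continuing `a` must fit into the rest of `s`. -/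
theorem card_sub_one_mul_le_length [Fintype C] [Nontrivial C] (b : C) {n : ℕ} {s : List C}
    (h : ∀ w : List C, w.length = n → (b :: w).IsChain (· ≠ ·) → w <+ s) :
    (Fintype.card C - 1) * n ≤ s.length := by
  induction n generalizing b s with
  | zero => simp
  | succ n ih =>
    have hcons (a : C) (hab : a ≠ b) (w : List C) (hw : w.length = n)
        (hchain : (a :: w).IsChain (· ≠ ·)) : a :: w <+ s :=
      h (a :: w) (by simp [hw]) (hchain.cons_cons hab.symm)
    have hmem : ∀ a ∈ Finset.univ.erase b, a ∈ s := fun a ha => by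
      obtain ⟨w, hw, hchain⟩ := exists_isChain_ne a n
      exact (hcons a (Finset.ne_of_mem_erase ha) w hw hchain).subset mem_cons_self
    obtain ⟨a', ha'⟩ := exists_ne b
    obtain ⟨a, ha, hcard⟩ :=
      exists_card_le_idxOf_add_one ⟨a', Finset.mem_erase.2 ⟨ha', Finset.mem_univ _⟩⟩ hmem
    have hrest := ih a fun w hw hchain =>
      sublist_drop_idxOf (hcons a (Finset.ne_of_mem_erase ha) w hw hchain)
    have hidx : s.idxOf a < s.length := idxOf_lt_length_iff.2 (hmem a ha)
    rw [Finset.card_erase_of_mem (Finset.mem_univ _), Finset.card_univ] at hcard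
    rw [length_drop] at hrest
    rw [Nat.mul_succ]
    omega

end List

theorem SimpleGraph.Walk.exists_mem_support_eq {V : Type*} {G : SimpleGraph V} {u v : V}
    (p : G.Walk u v) (f : V → ℤ) (hf : ∀ x y, G.Adj x y → f y ≤ f x + 1) {m : ℤ}
    (hu : f u ≤ m) (hv : m ≤ f v) : ∃ z ∈ p.support, f z = m := by
  rcases hu.eq_or_lt with hu | hu
  · exact ⟨u, p.start_mem_support, hu⟩
  obtain ⟨d, hd, hd₁, hd₂⟩ := p.exists_boundary_dart {x | f x < m} hu (by simpa using hv)
  have := hf _ _ d.adj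
  simp only [Set.mem_ofPred_eq, not_lt] at hd₁ hd₂
  exact ⟨d.toProd.2, p.dart_snd_mem_support_of_mem_darts hd, by omega⟩

section Spider

variable {L r : ℕ}

theorem spider_adj_none {i : Fin L} {j : Fin r} (hj : (j : ℕ) = 0) :
    (spider L r).Adj (some (i, j)) none := by
  simp [spider, hj]

theorem spider_adj_some {i : Fin L} {j j' : Fin r} (h : (j : ℕ) + 1 = j') :
    (spider L r).Adj (some (i, j')) (some (i, j)) := by
  simp only [spider, fromRel_adj, ne_eq, Option.some.injEq, Prod.mk.injEq, true_and]
  exact ⟨fun h' => by omega, Or.inr h⟩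

theorem spider_exists_walk_to_none (u : Option (Fin L × Fin r)) :
    ∃ p : (spider L r).Walk u none, p.length ≤ r := by
  rcases u with _ | ⟨i, j, hj⟩
  · exact ⟨.nil, Nat.zero_le r⟩
  suffices ∃ p : (spider L r).Walk (some (i, ⟨j, hj⟩)) none, p.length = j + 1 from
    this.imp fun p hp => hp.trans_le hj
  induction j with
  | zero => exact ⟨.cons (spider_adj_none rfl) .nil, rfl⟩
  | succ j ih =>
    obtain ⟨p, hp⟩ := ih (by omega)
    exact ⟨.cons (spider_adj_some (j := ⟨j, by omega⟩) rfl) p, by simp [hp]⟩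

/-- Signed distance from the centre: positive along leg `i`, negative on the other legs. -/
def legDepth (i : Fin L) : Option (Fin L × Fin r) → ℤ
  | none => 0
  | some (i', j) => if i' = i then j + 1 else -(j + 1)

theorem legDepth_le_add_one {i : Fin L} {x y : Option (Fin L × Fin r)}
    (h : (spider L r).Adj x y) : legDepth i y ≤ legDepth i x + 1 := by
  obtain ⟨-, h | h⟩ := (fromRel_adj _ _ _).1 h <;>
    rcases x with _ | ⟨i₁, j₁⟩ <;> rcases y with _ | ⟨i₂, j₂⟩ <;> simp only at h <;>
    (try obtain ⟨rfl, h⟩ := h) <;> simp only [legDepth] <;> split_ifs <;> omega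

theorem eq_none_of_legDepth_eq_zero {i : Fin L} {z : Option (Fin L × Fin r)}
    (h : legDepth i z = 0) : z = none := by
  rcases z with _ | ⟨i', j⟩
  · rfl
  · simp only [legDepth] at h; split_ifs at h <;> omega

theorem eq_some_of_legDepth_eq {i : Fin L} {j : Fin r} {z : Option (Fin L × Fin r)}
    (h : legDepth i z = (j : ℤ) + 1) : z = some (i, j) := by
  rcases z with _ | ⟨i', j'⟩
  · simp only [legDepth] at h; omega
  · simp only [legDepth] at h
    split_ifs at h with hi
    · rw [hi, Fin.ext (by omega : (j' : ℕ) = j)]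
    · omega

variable {C : Type*} {ω : Option (Fin L × Fin r) → C} {i : Fin L} {v : Option (Fin L × Fin r)}
  {x : C}

/-- The monochromatic walk from `v` to a recoloured `u` passes through every depth between
`legDepth i v ≤ 0` and `legDepth i u`. -/
theorem exists_legDepth_eq_of_floodMove_ne (hv : ∀ j, v ≠ some (i, j))
    {u : Option (Fin L × Fin r)} (hu : floodMove (spider L r) ω v x u ≠ ω u) {m : ℤ}
    (hm : 0 ≤ m) (hmu : m ≤ legDepth i u) : ∃ z, legDepth i z = m ∧ ω z = ω u := by
  obtain ⟨p⟩ : (monoSubgraph (spider L r) ω).Reachable v u :=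
    not_not.1 (mt floodMove_of_not_reachable hu)
  have hv₀ : legDepth i v ≤ 0 := by
    rcases v with _ | ⟨i', j⟩
    · rfl
    · have hi' : i' ≠ i := fun h => hv j (by rw [h])
      simp only [legDepth, if_neg hi']
      omega
  obtain ⟨z, hz, hzm⟩ :=
    p.exists_mem_support_eq (legDepth i) (fun _ _ h => legDepth_le_add_one h.1) (hv₀.trans hm) hmu
  exact ⟨z, hzm, eq_of_mem_support_monoSubgraph p hz⟩

theorem spider_none_eq_of_floodMove_ne (hv : ∀ j, v ≠ some (i, j)) {j : Fin r}
    (hu : floodMove (spider L r) ω v x (some (i, j)) ≠ ω (some (i, j))) :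
    ω none = ω (some (i, j)) := by
  obtain ⟨z, hz, hzu⟩ := exists_legDepth_eq_of_floodMove_ne hv hu le_rfl
    (by simp [legDepth]; omega)
  rwa [eq_none_of_legDepth_eq_zero hz] at hzu

theorem spider_pred_eq_of_floodMove_ne (hv : ∀ j, v ≠ some (i, j)) {j j' : Fin r}
    (hjj' : (j : ℕ) + 1 = j')
    (hu : floodMove (spider L r) ω v x (some (i, j')) ≠ ω (some (i, j'))) :
    ω (some (i, j)) = ω (some (i, j')) := by
  obtain ⟨z, hz, hzu⟩ := exists_legDepth_eq_of_floodMove_ne hv hu (m := j + 1) (by positivity)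
    (by simp [legDepth]; omega)
  rwa [eq_some_of_legDepth_eq hz] at hzu

end Spider

section LowerBound

variable {L r : ℕ} {C : Type*}

def legWord (ω : Option (Fin L × Fin r) → C) (i : Fin L) : List C :=
  List.ofFn fun j => ω (some (i, j))

variable {ω : Option (Fin L × Fin r) → C} {i : Fin L}

theorem legWord_drop_eq_cons {k : ℕ} (hk : k < r) :
    (legWord ω i).drop k = ω (some (i, ⟨k, hk⟩)) :: (legWord ω i).drop (k + 1) := by
  rw [List.drop_eq_getElem_cons (by simpa [legWord])]
  simp [legWord]

/-- Recolouring a leg vertex from off the leg recolours its predecessor, which therefore has the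
same colour. -/
theorem legWord_drop_succ_floodMove {v : Option (Fin L × Fin r)} (hv : ∀ j, v ≠ some (i, j))
    {x : C} {k : ℕ} (hchain : ((legWord ω i).drop k).IsChain (· ≠ ·)) :
    (legWord (floodMove (spider L r) ω v x) i).drop (k + 1) = (legWord ω i).drop (k + 1) := by
  refine List.ext_getElem (by simp [legWord]) fun n h₁ h₂ => ?_
  simp only [legWord, List.length_drop, List.length_ofFn] at h₁
  simp only [legWord, List.getElem_drop, List.getElem_ofFn]
  by_contra hne
  refine hchain.getElem n (by simp [legWord]; omega) ?_
  simpa [legWord, Nat.add_assoc, Nat.add_comm 1 n] using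
    spider_pred_eq_of_floodMove_ne hv (j := ⟨k + n, by omega⟩) (by simp; omega) hne

/-- The first vertex of the suffix can only change colour through a move made while the centre
has its colour, and until then the rest of the suffix keeps its colours. -/
theorem legWord_drop_sublist_floodTrace {d : C} (ms : List (Option (Fin L × Fin r) × C))
    (hms : ∀ m ∈ ms, ∀ j, m.1 ≠ some (i, j)) (ω : Option (Fin L × Fin r) → C) (k : ℕ)
    (hd : ∀ u, floodSeq (spider L r) ms ω u = d)
    (hchain : ((legWord ω i).drop k).IsChain (· ≠ ·)) :
    (legWord ω i).drop k <+ floodTrace (spider L r) none ms ω := by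
  induction ms generalizing ω k with
  | nil =>
    have hnone : floodTrace (spider L r) none [] ω = [d] := congrArg ([·]) (hd none)
    rw [hnone]
    refine List.sublist_singleton_of_isChain_ne hchain fun c hc => ?_
    obtain ⟨j, rfl⟩ := List.mem_ofFn.1 (List.mem_of_mem_drop hc)
    exact hd _
  | cons m ms ih =>
    obtain ⟨v, x⟩ := m
    obtain ⟨hv, hms⟩ := List.forall_mem_cons.1 hms
    rcases lt_or_ge k r with hk | hk
    swap
    · rw [List.drop_eq_nil_of_le (by simpa [legWord])]
      exact List.nil_sublist _
    set ω' := floodMove (spider L r) ω v x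
    have htail := legWord_drop_succ_floodMove hv (x := x) hchain
    by_cases hchg : ω' (some (i, ⟨k, hk⟩)) = ω (some (i, ⟨k, hk⟩))
    · have hsame : (legWord ω' i).drop k = (legWord ω i).drop k := by
        rw [legWord_drop_eq_cons hk, legWord_drop_eq_cons hk, htail, hchg]
      have := ih hms ω' k hd (hsame ▸ hchain)
      rw [hsame] at this
      exact this.cons _
    · rw [legWord_drop_eq_cons hk] at hchain ⊢
      rw [← spider_none_eq_of_floodMove_ne hv hchg]
      have := ih hms ω' (k + 1) hd (htail ▸ hchain.tail)
      rw [htail] at this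
      exact List.cons_sublist_cons.2 this

theorem spider_lower_bound [Fintype C] [DecidableEq C] [Nontrivial C]
    (hchain : ∀ i, (ω none :: legWord ω i).IsChain (· ≠ ·))
    (hcopies : ∀ w : List C, w.length = r → (ω none :: w).IsChain (· ≠ ·) →
      (Fintype.card C - 1) * r ≤ #{i | legWord ω i = w})
    {ms : List (Option (Fin L × Fin r) × C)} {d : C}
    (hd : ∀ u, floodSeq (spider L r) ms ω u = d) :
    (Fintype.card C - 1) * r ≤ ms.length := by
  by_contra! hlt
  set touched : Finset (Fin L) := (ms.filterMap fun m => m.1.map Prod.fst).toFinset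
  have htouched : touched.card ≤ ms.length :=
    (List.toFinset_card_le _).trans (List.length_filterMap_le _ _)
  suffices ∀ w : List C, w.length = r → (ω none :: w).IsChain (· ≠ ·) →
      w <+ (floodTrace (spider L r) none ms ω).tail by
    exact hlt.not_ge (by simpa [length_floodTrace] using
      List.card_sub_one_mul_le_length (ω none) this)
  intro w hw hwchain
  obtain ⟨i, hi, hit⟩ := Finset.exists_mem_notMem_of_card_lt_card
    ((htouched.trans_lt hlt).trans_le (hcopies w hw hwchain))
  have hunt : ∀ m ∈ ms, ∀ j, m.1 ≠ some (i, j) := fun m hm j h =>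
    hit (List.mem_toFinset.2 (List.mem_filterMap.2 ⟨m, hm, by simp [h]⟩))
  have hsub := legWord_drop_sublist_floodTrace ms hunt ω 0 hd (hchain i).tail
  rw [List.drop_zero, (Finset.mem_filter.1 hi).2, floodTrace_eq_cons] at hsub
  exact List.sublist_of_sublist_cons_of_isChain_ne hwchain hsub

end LowerBound

section HardColouring

variable {k r : ℕ}

/-- Each letter `e` is read as the `e`-th colour different from the previous one. -/
def chainDecode : Fin (k + 1) → List (Fin k) → List (Fin (k + 1))
  | _, [] => []
  | b, e :: es => b.succAbove e :: chainDecode (b.succAbove e) es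

theorem length_chainDecode (b : Fin (k + 1)) (es : List (Fin k)) :
    (chainDecode b es).length = es.length := by
  induction es generalizing b with
  | nil => rfl
  | cons e es ih => simp [chainDecode, ih]

theorem isChain_chainDecode (b : Fin (k + 1)) (es : List (Fin k)) :
    (b :: chainDecode b es).IsChain (· ≠ ·) := by
  induction es generalizing b with
  | nil => exact List.isChain_singleton b
  | cons e es ih => exact (ih _).cons_cons (b.succAbove_ne e).symm

theorem exists_chainDecode_eq {b : Fin (k + 1)} {w : List (Fin (k + 1))}
    (h : (b :: w).IsChain (· ≠ ·)) : ∃ es, chainDecode b es = w := by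
  induction w generalizing b with
  | nil => exact ⟨[], rfl⟩
  | cons a w ih =>
    obtain ⟨hba, hw⟩ := List.isChain_cons_cons.1 h
    obtain ⟨e, rfl⟩ := Fin.exists_succAbove_eq (Ne.symm hba)
    obtain ⟨es, hes⟩ := ih hw
    exact ⟨e :: es, by rw [chainDecode, hes]⟩

noncomputable def spiderLegEquiv (k r : ℕ) :
    Fin ((r + 1) * k ^ (r + 1)) ≃ List.Vector (Fin k) r × Fin ((r + 1) * k) :=
  Fintype.equivOfCardEq (by simp [card_vector]; ring)

/-- Centre coloured `0`; every word of length `r` whose consecutive colours differ, starting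
with a colour `≠ 0`, is `chainDecode 0` of a vector and so labels `(r + 1) * k` legs. -/
noncomputable def hardColouring (k r : ℕ) :
    Option (Fin ((r + 1) * k ^ (r + 1)) × Fin r) → Fin (k + 1)
  | none => 0
  | some (i, j) => (chainDecode 0 (spiderLegEquiv k r i).1.toList).getD j 0

theorem legWord_hardColouring (i : Fin ((r + 1) * k ^ (r + 1))) :
    legWord (hardColouring k r) i = chainDecode 0 (spiderLegEquiv k r i).1.toList := by
  refine List.ext_getElem (by simp [legWord, length_chainDecode]) fun n h₁ h₂ => ?_
  simp [legWord, hardColouring, List.getElem?_eq_getElem h₂]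

theorem isChain_hardColouring (i : Fin ((r + 1) * k ^ (r + 1))) :
    (hardColouring k r none :: legWord (hardColouring k r) i).IsChain (· ≠ ·) := by
  rw [legWord_hardColouring]
  exact isChain_chainDecode 0 _

theorem le_card_legWord_hardColouring {w : List (Fin (k + 1))} (hw : w.length = r)
    (hchain : (hardColouring k r none :: w).IsChain (· ≠ ·)) :
    (r + 1) * k ≤ #{i | legWord (hardColouring k r) i = w} := by
  change (0 :: w).IsChain _ at hchain
  obtain ⟨es, rfl⟩ := exists_chainDecode_eq hchain
  have hes : es.length = r := by rwa [length_chainDecode] at hw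
  calc (r + 1) * k = #(univ : Finset (Fin ((r + 1) * k))) := by simp
    _ ≤ _ := Finset.card_le_card_of_injOn (fun n => (spiderLegEquiv k r).symm (⟨es, hes⟩, n))
      (fun n _ => by simp [legWord_hardColouring])
      (fun n _ n' _ h => (Prod.mk.inj ((spiderLegEquiv k r).symm.injective h)).2)

theorem surjective_hardColouring (hr : 1 ≤ r) : Function.Surjective (hardColouring k r) := by
  intro b
  by_cases hb : b = 0
  · exact ⟨none, hb.symm⟩
  obtain ⟨e, he⟩ := Fin.exists_succAbove_eq hb
  let es : List.Vector (Fin k) r := ⟨e :: List.replicate (r - 1) e, by simp; omega⟩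
  refine ⟨some ((spiderLegEquiv k r).symm (es, ⟨0, Nat.mul_pos r.succ_pos e.pos⟩), ⟨0, hr⟩), ?_⟩
  simp [hardColouring, es, chainDecode, he]

end HardColouring

/-- For `c ≥ 2` and `r ≥ 1`, the tree `T_{c,r}`, consisting of `(r+1)(c-1)^(r+1)` paths on
`r + 1` vertices sharing a common first vertex (a spider with `(r+1)(c-1)^(r+1)` legs of
length `r`), satisfies `M_c(T_{c,r}) = (c - 1) * r`. -/
theorem maxFloodCost_spider (c r : ℕ) (hc : 2 ≤ c) (hr : 1 ≤ r) :
    maxFloodCost c (spider ((r + 1) * (c - 1) ^ (r + 1)) r) = (c - 1) * r := by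
  obtain ⟨k, rfl⟩ : ∃ k, c = k + 1 := ⟨c - 1, by omega⟩
  have : Nontrivial (Fin (k + 1)) := Fin.nontrivial_iff_two_le.2 hc
  rw [Nat.add_sub_cancel]
  have hwalk := spider_exists_walk_to_none (L := (r + 1) * k ^ (r + 1)) (r := r)
  have hupper (ω : Option (Fin ((r + 1) * k ^ (r + 1)) × Fin r) → Fin (k + 1)) :
      floodCostMin (spider _ r) ω ≤ k * r := by
    simpa using floodCostMin_le ω hwalk
  have hlower : k * r ≤ floodCostMin (spider _ r) (hardColouring k r) := by
    refine le_floodCostMin (exists_floodSeq_eq _ hwalk) fun ms d hd => ?_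
    simpa using spider_lower_bound isChain_hardColouring (fun w hw hchain =>
      (le_card_legWord_hardColouring hw hchain).trans' (by simp; nlinarith)) hd
  refine IsGreatest.csSup_eq ⟨⟨hardColouring k r, surjective_hardColouring hr,
    (hupper _).antisymm hlower⟩, ?_⟩
  rintro _ ⟨ω, -, rfl⟩
  exact hupper ω
end

section
/- Let P be a path on n vertices and let ω be an r-shifted C-rainbow colouring of P, for some colour-set C with |C| = c ≥ 2 and some r ∈ {0,…,n−1}. Then m(P,ω) ≥ n − ⌈n/c⌉. -/
open Classical SimpleGraph

/-- `ω` is an `r`-shifted `C`-rainbow colouring of the path `v₁ … vₙ` (here indexed by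
`Fin n`, with `v_i` corresponding to index `i - 1`): there is a bijective indexing
`e : ZMod c → C` of the `c` colours (combining the indexing `d` of `C` with the
permutation `π`) such that `ω(v_i) = e((i - r) mod c)` for all `1 ≤ i ≤ n`.
A `C`-rainbow colouring is a `0`-shifted `C`-rainbow colouring. -/
def IsShiftedRainbow {C : Type*} (c r : ℕ) {n : ℕ} (ω : Fin n → C) : Prop :=
  ∃ e : ZMod c → C, Function.Bijective e ∧
    ∀ i : Fin n, ω i = e ((((i : ℕ) + 1 : ℕ) : ZMod c) - ((r : ℕ) : ZMod c))


/-!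
Read a colouring of the path as `f : ℕ → C` on the positions `0, …, n - 1`, and let `D f` be
the number of boundaries between consecutive runs. A linkage of `f` is a set `S` of positions
lying in pairwise distinct runs, split into monochromatic classes no two of which cross.

The potential `D f - (|S| - #classes)` of a best linkage drops by at most one per move. Say
recolouring the run `[ℓ, r]` of `f` with `b` gives `g`, and `S` is a linkage of `g`. The run of
`ℓ` in `g` contains at most one point `u` of `S` (add `ℓ` as a singleton class if there is
none). Replace `u` by the neighbours `ℓ - 1`, `r + 1` of the run that have colour `b` in `f`;
relabelling through the monotone map collapsing the run of `ℓ` in `g` onto `u` keeps classes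
non-crossing, and `D f` exceeds `D g` by at most the number of those neighbours.

A flooded path has potential `0`. For a shifted rainbow colouring `D f = n - 1`, and the points
of a class are congruent mod `c`; splitting `S` at the last point `x` and its predecessor `y` in
its class (nothing between them is linked to the outside) gives `c (|S| - #classes) ≤ n - 1`.
So at least `n - 1 - ⌊(n - 1) / c⌋ = n - ⌈n / c⌉` moves are needed.
-/

theorem Set.OrdConnected.monotone_ite {α : Type*} [LinearOrder α] {H : Set α}
    [DecidablePred (· ∈ H)] (hH : H.OrdConnected) {u : α} (hu : u ∈ H) :
    Monotone fun x => if x ∈ H then u else x := by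
  intro x y hxy
  dsimp only
  split_ifs with hx hy hy
  · exact le_rfl
  · by_contra! h
    exact hy (hH.out hx hu ⟨hxy, h.le⟩)
  · by_contra! h
    exact hx (hH.out hu hy ⟨h.le, hxy⟩)
  · exact hxy

namespace FloodIt

variable {C : Type*}

def SameRun (f : ℕ → C) (x y : ℕ) : Prop :=
  ∀ z, min x y ≤ z → z ≤ max x y → f z = f x

section SameRun

variable {f : ℕ → C} {x y z : ℕ}

theorem SameRun.refl (f : ℕ → C) (x : ℕ) : SameRun f x x := fun z h1 h2 => by
  rw [show z = x by omega]

theorem SameRun.apply_eq (h : SameRun f x y) : f y = f x := h y (by omega) (by omega)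

theorem SameRun.mono {p q : ℕ} (h : SameRun f x y) (hp : min x y ≤ p ∧ p ≤ max x y)
    (hq : min x y ≤ q ∧ q ≤ max x y) : SameRun f p q := fun z h1 h2 => by
  rw [h z (by omega) (by omega), h p hp.1 hp.2]

theorem SameRun.symm (h : SameRun f x y) : SameRun f y x :=
  h.mono (by omega) (by omega)

theorem SameRun.trans (hxy : SameRun f x y) (hyz : SameRun f y z) : SameRun f x z := by
  intro w h1 h2
  by_cases hw : min x y ≤ w ∧ w ≤ max x y
  · exact hxy w hw.1 hw.2
  · rw [hyz w (by omega) (by omega), hxy.apply_eq]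

theorem sameRun_succ (h : f (x + 1) = f x) : SameRun f x (x + 1) := fun z h1 h2 => by
  rcases (show z = x ∨ z = x + 1 by omega) with rfl | rfl
  · rfl
  · exact h

theorem ordConnected_setOf_sameRun (f : ℕ → C) (x : ℕ) : {z | SameRun f x z}.OrdConnected := by
  refine ⟨fun p hp q hq z hz => ?_⟩
  by_cases hzp : min x p ≤ z ∧ z ≤ max x p
  · exact SameRun.mono hp (by omega) hzp
  · exact SameRun.mono hq (by omega) (by simp only [Set.mem_Icc] at hz; omega)

end SameRun

structure IsMaximalRun (n : ℕ) (f : ℕ → C) (ℓ r : ℕ) : Prop where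
  le : ℓ ≤ r
  lt : r < n
  apply_eq : ∀ z, ℓ ≤ z → z ≤ r → f z = f ℓ
  left : ℓ = 0 ∨ f (ℓ - 1) ≠ f ℓ
  right : r + 1 = n ∨ f (r + 1) ≠ f ℓ

theorem exists_isMaximalRun (f : ℕ → C) {n v : ℕ} (hv : v < n) :
    ∃ ℓ r, IsMaximalRun n f ℓ r ∧ ∀ z, z < n ∧ SameRun f v z ↔ ℓ ≤ z ∧ z ≤ r := by
  have hex : ∃ ℓ, SameRun f ℓ v := ⟨v, SameRun.refl f v⟩
  have hℓ : SameRun f (Nat.find hex) v := Nat.find_spec hex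
  have hℓv : Nat.find hex ≤ v := Nat.find_min' hex (SameRun.refl f v)
  have hr : SameRun f v (Nat.findGreatest (SameRun f v) (n - 1)) :=
    Nat.findGreatest_spec (m := v) (by omega) (SameRun.refl f v)
  have hvr : v ≤ Nat.findGreatest (SameRun f v) (n - 1) :=
    Nat.le_findGreatest (by omega) (SameRun.refl f v)
  have hrn := Nat.findGreatest_le (P := SameRun f v) (n - 1)
  set ℓ := Nat.find hex
  set r := Nat.findGreatest (SameRun f v) (n - 1)
  have hℓr : SameRun f ℓ r := hℓ.trans hr
  refine ⟨ℓ, r, ⟨by omega, by omega, fun z h1 h2 => hℓr z (by omega) (by omega), ?_, ?_⟩,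
    fun z => ⟨fun ⟨hz, hvz⟩ => ⟨?_, ?_⟩, fun hz => ⟨by omega, hℓ.symm.trans ?_⟩⟩⟩
  · refine or_iff_not_imp_left.2 fun h0 heq => Nat.find_min hex (m := ℓ - 1) (by omega) ?_
    exact (sameRun_succ (x := ℓ - 1) (by rw [Nat.sub_add_cancel (by omega), heq])).trans
      (by rwa [Nat.sub_add_cancel (by omega)])
  · refine or_iff_not_imp_left.2 fun hn heq =>
      Nat.findGreatest_is_greatest (k := r + 1) (n := n - 1) (by omega) (by omega)
        (hr.trans (sameRun_succ ?_))
    rw [heq, hℓr.apply_eq]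
  · by_contra! h
    exact Nat.find_min hex h hvz.symm
  · by_contra! h
    exact Nat.findGreatest_is_greatest h (by omega) hvz
  · exact hℓr.mono (by omega) (by omega)

def recolour (f : ℕ → C) (ℓ r : ℕ) (b : C) : ℕ → C :=
  fun z => if ℓ ≤ z ∧ z ≤ r then b else f z

noncomputable def boundaries (n : ℕ) (f : ℕ → C) : Finset ℕ :=
  (Finset.range (n - 1)).filter fun i => f i ≠ f (i + 1)

theorem boundaries_eq_empty {n : ℕ} {f : ℕ → C} {d : C} (h : ∀ i < n, f i = d) :
    boundaries n f = ∅ :=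
  Finset.filter_eq_empty_iff.2 fun i hi => by
    rw [Finset.mem_range] at hi
    rw [h i (by omega), h (i + 1) (by omega), ne_eq, not_not]

theorem boundaries_eq_range {n : ℕ} {f : ℕ → C} (h : ∀ i, i + 1 < n → f i ≠ f (i + 1)) :
    boundaries n f = Finset.range (n - 1) :=
  Finset.filter_true_of_mem fun i hi => h i (by rw [Finset.mem_range] at hi; omega)

noncomputable def flank (n : ℕ) (f : ℕ → C) (ℓ r : ℕ) (b : C) : Finset ℕ :=
  (Finset.range n).filter fun z => (z + 1 = ℓ ∨ z = r + 1) ∧ f z = b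

section Recolour

variable {n ℓ r : ℕ} {f : ℕ → C} {b : C} {x y : ℕ}

theorem recolour_of_mem (h : ℓ ≤ x ∧ x ≤ r) : recolour f ℓ r b x = b := if_pos h

theorem recolour_of_not_mem (h : ¬(ℓ ≤ x ∧ x ≤ r)) : recolour f ℓ r b x = f x := if_neg h

theorem sameRun_recolour_of_mem (h : ℓ ≤ x ∧ x ≤ r) : SameRun (recolour f ℓ r b) ℓ x :=
  fun z h1 h2 => by rw [recolour_of_mem (by omega), recolour_of_mem (by omega)]

theorem mem_flank : x ∈ flank n f ℓ r b ↔ x < n ∧ (x + 1 = ℓ ∨ x = r + 1) ∧ f x = b := by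
  simp only [flank, Finset.mem_filter, Finset.mem_range]

theorem IsMaximalRun.sameRun_recolour (hK : IsMaximalRun n f ℓ r) (b : C)
    (hx : ¬(ℓ ≤ x ∧ x ≤ r)) (hy : ¬(ℓ ≤ y ∧ y ≤ r)) (h : SameRun f x y) :
    SameRun (recolour f ℓ r b) x y := by
  intro z h1 h2
  rw [recolour_of_not_mem hx]
  by_cases hz : ℓ ≤ z ∧ z ≤ r
  · -- then `ℓ - 1` and `ℓ` both lie between `x` and `y`, against maximality of the run
    exfalso
    rcases hK.left with h0 | h0
    · omega
    · exact h0 (by rw [h (ℓ - 1) (by omega) (by omega), h ℓ (by omega) (by omega)])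
  · rw [recolour_of_not_mem hz, h z h1 h2]

theorem IsMaximalRun.sameRun_recolour_of_mem_flank (hK : IsMaximalRun n f ℓ r)
    (hx : x ∈ flank n f ℓ r b) : SameRun (recolour f ℓ r b) ℓ x := by
  rw [mem_flank] at hx
  have := hK.le
  intro z h1 h2
  by_cases hz : ℓ ≤ z ∧ z ≤ r
  · rw [recolour_of_mem hz, recolour_of_mem (by omega)]
  · rw [recolour_of_not_mem hz, recolour_of_mem (by omega), show z = x by omega, hx.2.2]

theorem IsMaximalRun.not_sameRun_of_mem_flank (hK : IsMaximalRun n f ℓ r)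
    (hx : x ∈ flank n f ℓ r b) (hy : y ∈ flank n f ℓ r b) (hxy : x ≠ y) : ¬SameRun f x y := by
  intro h
  rw [mem_flank] at hx hy
  have := hK.le
  obtain ⟨z, hz, hfz⟩ : ∃ z, z + 1 = ℓ ∧ f z = b := by
    rcases hx.2.1 with h1 | h1
    · exact ⟨x, h1, hx.2.2⟩
    · rcases hy.2.1 with h2 | h2
      · exact ⟨y, h2, hy.2.2⟩
      · omega
  rcases hK.left with h0 | h0
  · omega
  · apply h0
    rw [show ℓ - 1 = z by omega, hfz, h ℓ (by omega) (by omega), hx.2.2]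

theorem IsMaximalRun.card_boundaries_le (hK : IsMaximalRun n f ℓ r) (b : C) :
    (boundaries n f).card ≤
      (boundaries n (recolour f ℓ r b)).card + (flank n f ℓ r b).card := by
  have hsub : boundaries n f ⊆ boundaries n (recolour f ℓ r b) ∪
      (flank n f ℓ r b).image fun z => if z < ℓ then z else z - 1 := by
    intro i hi
    simp only [boundaries, Finset.mem_filter, Finset.mem_range] at hi
    simp only [boundaries, Finset.mem_union, Finset.mem_filter, Finset.mem_range,
      Finset.mem_image, mem_flank]
    by_cases hg : recolour f ℓ r b i = recolour f ℓ r b (i + 1)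
    · right
      unfold recolour at hg
      split_ifs at hg with h1 h2 h2
      · exact absurd (by rw [hK.apply_eq i h1.1 h1.2, hK.apply_eq (i + 1) h2.1 h2.2]) hi.2
      · exact ⟨i + 1, ⟨by omega, by omega, hg.symm⟩, by split_ifs <;> omega⟩
      · exact ⟨i, ⟨by omega, by omega, hg⟩, by split_ifs <;> omega⟩
      · exact absurd hg hi.2
    · exact Or.inl ⟨hi.1, hg⟩
  calc (boundaries n f).card
      ≤ (boundaries n (recolour f ℓ r b) ∪
          (flank n f ℓ r b).image fun z => if z < ℓ then z else z - 1).card :=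
        Finset.card_le_card hsub
    _ ≤ _ := (Finset.card_union_le _ _).trans (Nat.add_le_add_left Finset.card_image_le _)

end Recolour

def NonCrossing (S : Finset ℕ) (part : ℕ → ℕ) : Prop :=
  ∀ a ∈ S, ∀ b ∈ S, ∀ c ∈ S, ∀ d ∈ S, a < b → b < c → c < d →
    part a = part c → part b = part d → part a = part b

section NonCrossing

variable {S T : Finset ℕ} {part : ℕ → ℕ}

theorem NonCrossing.subset (h : NonCrossing S part) (hT : T ⊆ S) : NonCrossing T part :=
  fun a ha b hb c hc d hd => h a (hT ha) b (hT hb) c (hT hc) d (hT hd)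

theorem NonCrossing.comp (h : NonCrossing S part) {φ : ℕ → ℕ} (hφ : Monotone φ)
    (hmaps : ∀ x ∈ T, φ x ∈ S) : NonCrossing T (part ∘ φ) := by
  intro a ha b hb c hc d hd hab hbc hcd hac hbd
  simp only [Function.comp_apply] at hac hbd ⊢
  obtain h1 | h1 := (hφ hab.le).lt_or_eq
  · obtain h2 | h2 := (hφ hbc.le).lt_or_eq
    · obtain h3 | h3 := (hφ hcd.le).lt_or_eq
      · exact h _ (hmaps a ha) _ (hmaps b hb) _ (hmaps c hc) _ (hmaps d hd) h1 h2 h3 hac hbd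
      · rw [hac, h3, hbd]
    · rw [hac, h2]
  · rw [h1]

theorem NonCrossing.insert_fresh (h : NonCrossing S part) {x μ : ℕ} (hx : x ∉ S)
    (hμ : μ ∉ S.image part) : NonCrossing (insert x S) (Function.update part x μ) := by
  have hfresh : ∀ y ∈ insert x S, ∀ z ∈ insert x S, y ≠ z →
      Function.update part x μ y = Function.update part x μ z → y ≠ x := by
    rintro y hy z hz hyz hlabel rfl
    rw [Finset.mem_insert] at hz
    rcases hz with rfl | hz
    · exact hyz rfl
    · rw [Function.update_self, Function.update_of_ne (by rintro rfl; exact hx hz)] at hlabel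
      exact hμ (Finset.mem_image.2 ⟨z, hz, hlabel.symm⟩)
  intro a ha b hb c hc d hd hab hbc hcd hac hbd
  have hmem : ∀ y ∈ insert x S, y ≠ x → y ∈ S ∧ Function.update part x μ y = part y :=
    fun y hy hyx => ⟨(Finset.mem_insert.1 hy).resolve_left hyx, Function.update_of_ne hyx _ _⟩
  have ha' := hmem a ha (hfresh a ha c hc (by omega) hac)
  have hb' := hmem b hb (hfresh b hb d hd (by omega) hbd)
  have hc' := hmem c hc (hfresh c hc a ha (by omega) hac.symm)
  have hd' := hmem d hd (hfresh d hd b hb (by omega) hbd.symm)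
  rw [ha'.2, hc'.2] at hac
  rw [hb'.2, hd'.2] at hbd
  rw [ha'.2, hb'.2]
  exact h a ha'.1 b hb'.1 c hc'.1 d hd'.1 hab hbc hcd hac hbd

theorem NonCrossing.disjoint_image (h : NonCrossing S part) {x y : ℕ} (hx : x ∈ S) (hy : y ∈ S)
    (hyx : part y = part x) (hgap : ∀ z ∈ S, y < z → z < x → part z ≠ part x) :
    Disjoint ((S.filter fun z => y < z ∧ z < x).image part)
      ((S.filter fun z => z ≤ y).image part) := by
  simp only [Finset.disjoint_left, Finset.mem_image, Finset.mem_filter]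
  rintro _ ⟨z, ⟨hz, hyz, hzx⟩, rfl⟩ ⟨w, ⟨hw, hwy⟩, hwz⟩
  refine hgap z hz hyz hzx ?_
  rcases hwy.lt_or_eq with hwy | rfl
  · rw [← hwz, h w hw y hy z hz x hx hwy hyz hzx hwz hyx, hyx]
  · rw [← hwz, hyx]

theorem NonCrossing.card_split (h : NonCrossing S part) {x y : ℕ} (hx : x ∈ S)
    (hxmax : ∀ z ∈ S, z ≤ x) (hy : y ∈ S) (hyx : y < x) (hpy : part y = part x)
    (hgap : ∀ z ∈ S, y < z → z < x → part z ≠ part x) :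
    S.card = (S.filter fun z => y < z ∧ z < x).card + (S.filter fun z => z ≤ y).card + 1 ∧
      (S.image part).card = ((S.filter fun z => y < z ∧ z < x).image part).card +
        ((S.filter fun z => z ≤ y).image part).card := by
  have hsplit : S.erase x = (S.filter fun z => y < z ∧ z < x) ∪ S.filter fun z => z ≤ y := by
    ext z
    simp only [Finset.mem_erase, Finset.mem_union, Finset.mem_filter]
    constructor
    · rintro ⟨hzx, hz⟩
      rcases le_or_gt z y with hzy | hzy
      · exact Or.inr ⟨hz, hzy⟩
      · exact Or.inl ⟨hz, hzy, lt_of_le_of_ne (hxmax z hz) hzx⟩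
    · rintro (⟨hz, -, hzx⟩ | ⟨hz, hzy⟩) <;> exact ⟨by omega, hz⟩
  have hpx : part x ∈ (S.filter fun z => z ≤ y).image part :=
    hpy ▸ Finset.mem_image_of_mem part (Finset.mem_filter.2 ⟨hy, le_rfl⟩)
  constructor
  · rw [← Finset.card_erase_add_one hx, hsplit, Finset.card_union_of_disjoint
      (Finset.disjoint_filter.2 fun z _ h1 h2 => by omega)]
  · rw [← Finset.insert_erase hx, Finset.image_insert, Finset.insert_erase hx, hsplit,
      Finset.image_union, Finset.insert_eq_of_mem (Finset.mem_union_right _ hpx),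
      Finset.card_union_of_disjoint (h.disjoint_image hx hy hpy hgap)]

theorem mul_add_one_le_of_lt {c i p k : ℕ} (hk : c ∣ k) (h : c * i < c * p + k) :
    c * (i + 1) ≤ c * p + k := by
  obtain ⟨m, rfl⟩ := hk
  rw [← mul_add] at h ⊢
  exact Nat.mul_le_mul_left c (Nat.lt_of_mul_lt_mul_left h)

theorem NonCrossing.mul_card_le {c a b : ℕ} (hS : NonCrossing S part)
    (hdvd : ∀ x ∈ S, ∀ y ∈ S, x ≤ y → part x = part y → c ∣ y - x)
    (hab : ∀ x ∈ S, a ≤ x ∧ x ≤ b) : c * S.card ≤ c * (S.image part).card + (b - a) := by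
  induction S using Finset.strongInduction generalizing a b with
  | H S ih =>
  have ih' : ∀ T ⊂ S, ∀ {a b : ℕ}, (∀ x ∈ T, a ≤ x ∧ x ≤ b) →
      c * T.card ≤ c * (T.image part).card + (b - a) := fun T hT _ _ =>
    ih T hT (hS.subset hT.subset) fun x hx y hy => hdvd x (hT.subset hx) y (hT.subset hy)
  rcases S.eq_empty_or_nonempty with rfl | hne
  · simp
  obtain ⟨x, hx, hxmax⟩ := S.exists_max_image id hne
  by_cases hpred : ∃ y ∈ S, y < x ∧ part y = part x
  · obtain ⟨y, hyT, hymax⟩ := (S.filter fun z => z < x ∧ part z = part x).exists_max_image id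
      (by simpa only [Finset.Nonempty, Finset.mem_filter, and_assoc] using hpred)
    obtain ⟨hy, hyx, hpy⟩ := Finset.mem_filter.1 hyT
    obtain ⟨hcard, himage⟩ := hS.card_split hx hxmax hy hyx hpy fun z hz hyz hzx hpz =>
      (hymax z (Finset.mem_filter.2 ⟨hz, hzx, hpz⟩)).not_gt hyz
    have hI := ih' (S.filter fun z => y < z ∧ z < x) (Finset.filter_ssubset.2 ⟨x, hx, by omega⟩)
      (a := y + 1) (b := x - 1) fun z hz => by obtain ⟨-, hz⟩ := Finset.mem_filter.1 hz; omega
    have hO := ih' (S.filter fun z => z ≤ y) (Finset.filter_ssubset.2 ⟨x, hx, by omega⟩)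
      fun z hz => by obtain ⟨hz, hzy⟩ := Finset.mem_filter.1 hz; exact ⟨(hab z hz).1, hzy⟩
    -- `c ∣ x - y` improves the bound `x - y - 2` on the inner part to `x - y - c`
    have hinner := mul_add_one_le_of_lt (hdvd y hy x hx hyx.le hpy)
      (hI.trans_lt (Nat.add_lt_add_left (by omega) _))
    have := (hab x hx).2
    have := (hab y hy).1
    rw [hcard, himage]
    simp only [mul_add, mul_one] at hinner ⊢
    omega
  · push Not at hpred
    have hfresh : part x ∉ (S.erase x).image part := fun h => by
      obtain ⟨z, hz, hpz⟩ := Finset.mem_image.1 h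
      obtain ⟨hzx, hz⟩ := Finset.mem_erase.1 hz
      exact hpred z hz (lt_of_le_of_ne (hxmax z hz) hzx) hpz
    have := ih' _ (Finset.erase_ssubset hx) fun z hz => hab z (Finset.mem_of_mem_erase hz)
    rw [← Finset.insert_erase hx, Finset.image_insert, Finset.card_insert_of_notMem hfresh,
      Finset.card_insert_of_notMem (Finset.notMem_erase x S), mul_add, mul_add]
    omega

end NonCrossing

structure IsLinkage (n : ℕ) (f : ℕ → C) (S : Finset ℕ) (part : ℕ → ℕ) : Prop where
  lt : ∀ x ∈ S, x < n
  apply_eq : ∀ x ∈ S, ∀ y ∈ S, part x = part y → f x = f y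
  eq_of_sameRun : ∀ x ∈ S, ∀ y ∈ S, SameRun f x y → x = y
  nonCrossing : NonCrossing S part

namespace IsLinkage

variable {n : ℕ} {f : ℕ → C} {S : Finset ℕ} {part : ℕ → ℕ}

theorem empty : IsLinkage n f ∅ part :=
  ⟨by simp, by simp, by simp, fun a ha => by simp at ha⟩

theorem insert_fresh (hL : IsLinkage n f S part) {x μ : ℕ} (hxn : x < n)
    (hx : ∀ y ∈ S, ¬SameRun f x y) (hμ : μ ∉ S.image part) :
    IsLinkage n f (insert x S) (Function.update part x μ) := by
  have hxS : x ∉ S := fun h => hx x h (SameRun.refl f x)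
  have hlabel : ∀ y ∈ S, Function.update part x μ y = part y :=
    fun y hy => Function.update_of_ne (by rintro rfl; exact hxS hy) _ _
  have hne : ∀ y ∈ S, part y ≠ μ := fun y hy h => hμ (Finset.mem_image.2 ⟨y, hy, h⟩)
  refine ⟨?_, ?_, ?_, hL.nonCrossing.insert_fresh hxS hμ⟩
  · simpa [hxn] using hL.lt
  · simp only [Finset.mem_insert]
    rintro y (rfl | hy) z (rfl | hz) h
    · rfl
    · rw [Function.update_self, hlabel z hz] at h
      exact absurd h.symm (hne z hz)
    · rw [Function.update_self, hlabel y hy] at h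
      exact absurd h (hne y hy)
    · rw [hlabel y hy, hlabel z hz] at h
      exact hL.apply_eq y hy z hz h
  · simp only [Finset.mem_insert]
    rintro y (rfl | hy) z (rfl | hz) h
    · rfl
    · exact absurd h (hx z hz)
    · exact absurd h.symm (hx y hy)
    · exact hL.eq_of_sameRun y hy z hz h

theorem exists_sameRun (hL : IsLinkage n f S part) {x : ℕ} (hx : x < n) :
    ∃ S' part', IsLinkage n f S' part' ∧ (∃ u ∈ S', SameRun f x u) ∧
      (S'.image part').card + S.card ≤ (S.image part).card + S'.card := by
  by_cases h : ∃ u ∈ S, SameRun f x u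
  · exact ⟨S, part, hL, h, le_rfl⟩
  push Not at h
  obtain ⟨μ, hμ⟩ := Infinite.exists_notMem_finset (S.image part)
  have hxS : x ∉ S := fun hx => h x hx (SameRun.refl f x)
  refine ⟨insert x S, Function.update part x μ, hL.insert_fresh hx h hμ,
    ⟨x, Finset.mem_insert_self _ _, SameRun.refl f x⟩, ?_⟩
  rw [Finset.card_insert_of_notMem hxS, Finset.image_insert, Finset.image_congr (g := part)
    fun y hy => Function.update_of_ne (by rintro rfl; exact hxS hy) μ part]
  have := Finset.card_insert_le (Function.update part x μ x) (S.image part)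
  omega

end IsLinkage

theorem IsLinkage.not_sameRun_of_mem_erase {n ℓ u x : ℕ} {g : ℕ → C} {S : Finset ℕ}
    {part : ℕ → ℕ} (hL : IsLinkage n g S part) (hu : u ∈ S) (hℓu : SameRun g ℓ u)
    (hx : x ∈ S.erase u) : ¬SameRun g ℓ x := fun h =>
  (Finset.mem_erase.1 hx).1
    (hL.eq_of_sameRun x (Finset.mem_of_mem_erase hx) u hu (h.symm.trans hℓu))

section Step

variable {n ℓ r u : ℕ} {f : ℕ → C} {b : C} {S : Finset ℕ} {part : ℕ → ℕ}

theorem IsMaximalRun.collapse_mem (hK : IsMaximalRun n f ℓ r) (hu : u ∈ S) {x : ℕ}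
    (hx : x ∈ S.erase u ∪ flank n f ℓ r b) :
    (if SameRun (recolour f ℓ r b) ℓ x then u else x) ∈ S := by
  split_ifs with h
  · exact hu
  · rcases Finset.mem_union.1 hx with hx | hx
    · exact Finset.mem_of_mem_erase hx
    · exact absurd (hK.sameRun_recolour_of_mem_flank hx) h

theorem IsMaximalRun.isLinkage_of_recolour (hK : IsMaximalRun n f ℓ r)
    (hL : IsLinkage n (recolour f ℓ r b) S part) (hu : u ∈ S)
    (hℓu : SameRun (recolour f ℓ r b) ℓ u) :
    IsLinkage n f (S.erase u ∪ flank n f ℓ r b)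
      (part ∘ fun x => if SameRun (recolour f ℓ r b) ℓ x then u else x) := by
  set g := recolour f ℓ r b
  have hrun : ∀ x ∈ S.erase u ∪ flank n f ℓ r b, (x ∈ flank n f ℓ r b ↔ SameRun g ℓ x) := by
    refine fun x hx => ⟨hK.sameRun_recolour_of_mem_flank, fun h => ?_⟩
    rcases Finset.mem_union.1 hx with hx | hx
    · exact absurd h (hL.not_sameRun_of_mem_erase hu hℓu hx)
    · exact hx
  have hnotK : ∀ x ∈ S.erase u ∪ flank n f ℓ r b, ¬(ℓ ≤ x ∧ x ≤ r) := by
    intro x hx hK'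
    rcases Finset.mem_union.1 hx with hx | hx
    · exact hL.not_sameRun_of_mem_erase hu hℓu hx (sameRun_recolour_of_mem hK')
    · have := (mem_flank.1 hx).2.1
      omega
  have hcollapse : ∀ x, g (if SameRun g ℓ x then u else x) = g x := by
    intro x
    split_ifs with h
    · rw [hℓu.apply_eq, h.apply_eq]
    · rfl
  have hfg : ∀ x ∈ S.erase u ∪ flank n f ℓ r b, f x = g x :=
    fun x hx => (recolour_of_not_mem (hnotK x hx)).symm
  refine ⟨fun x hx => ?_, fun x hx y hy h => ?_, fun x hx y hy h => ?_,
    hL.nonCrossing.comp ((ordConnected_setOf_sameRun g ℓ).monotone_ite hℓu)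
      fun x hx => hK.collapse_mem hu hx⟩
  · rcases Finset.mem_union.1 hx with hx | hx
    · exact hL.lt x (Finset.mem_of_mem_erase hx)
    · exact (mem_flank.1 hx).1
  · rw [hfg x hx, hfg y hy, ← hcollapse x, ← hcollapse y]
    exact hL.apply_eq _ (hK.collapse_mem hu hx) _ (hK.collapse_mem hu hy) h
  · have hg : SameRun g x y := hK.sameRun_recolour b (hnotK x hx) (hnotK y hy) h
    by_cases hxN : x ∈ flank n f ℓ r b <;> by_cases hyN : y ∈ flank n f ℓ r b
    · by_contra hne
      exact hK.not_sameRun_of_mem_flank hxN hyN hne h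
    · exact absurd (((hrun x hx).1 hxN).trans hg) (mt (hrun y hy).2 hyN)
    · exact absurd (((hrun y hy).1 hyN).trans hg.symm) (mt (hrun x hx).2 hxN)
    · exact hL.eq_of_sameRun x (Finset.mem_of_mem_erase ((Finset.mem_union.1 hx).resolve_right
        hxN)) y (Finset.mem_of_mem_erase ((Finset.mem_union.1 hy).resolve_right hyN)) hg

theorem IsMaximalRun.exists_isLinkage_of_recolour (hK : IsMaximalRun n f ℓ r) (b : C)
    (hL : IsLinkage n (recolour f ℓ r b) S part) :
    ∃ T part', IsLinkage n f T part' ∧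
      (boundaries n f).card + (T.image part').card + S.card ≤
        (boundaries n (recolour f ℓ r b)).card + (S.image part).card + T.card + 1 := by
  obtain ⟨S', part', hL', ⟨u, hu, hℓu⟩, hS'⟩ := hL.exists_sameRun (hK.le.trans_lt hK.lt)
  refine ⟨_, _, hK.isLinkage_of_recolour hL' hu hℓu, ?_⟩
  have hdisj : Disjoint (S'.erase u) (flank n f ℓ r b) := Finset.disjoint_left.2 fun x hx hxN =>
    hL'.not_sameRun_of_mem_erase hu hℓu hx (hK.sameRun_recolour_of_mem_flank hxN)
  have hcard : (S'.erase u ∪ flank n f ℓ r b).card + 1 = S'.card + (flank n f ℓ r b).card := by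
    rw [Finset.card_union_of_disjoint hdisj, Finset.card_erase_of_mem hu]
    have := Finset.card_pos.2 ⟨u, hu⟩
    omega
  have himage : ((S'.erase u ∪ flank n f ℓ r b).image
      (part' ∘ fun x => if SameRun (recolour f ℓ r b) ℓ x then u else x)).card ≤
        (S'.image part').card :=
    Finset.card_le_card (Finset.image_subset_iff.2 fun x hx =>
      Finset.mem_image_of_mem part' (hK.collapse_mem hu hx))
  have hD := hK.card_boundaries_le b
  omega

end Step

-- Positions `≥ n` get the dummy colour `d`; they never matter.
def extend {n : ℕ} (d : C) (ω : Fin n → C) : ℕ → C :=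
  fun i => if h : i < n then ω ⟨i, h⟩ else d

section Path

variable {n : ℕ} {d : C} {ω : Fin n → C}

theorem extend_of_lt {i : ℕ} (h : i < n) : extend d ω i = ω ⟨i, h⟩ := dif_pos h

theorem sameRun_of_adj {u w : Fin n} (h : (monoSubgraph (pathGraph n) ω).Adj u w) :
    SameRun (extend d ω) u w := by
  obtain ⟨hadj, hcol⟩ := h
  rw [pathGraph_adj] at hadj
  intro z h1 h2
  rcases (show z = u ∨ z = w by omega) with rfl | rfl
  · rfl
  · rw [extend_of_lt w.isLt, extend_of_lt u.isLt, hcol]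

theorem reachable_of_sameRun {u w : Fin n} (hle : u ≤ w) (h : SameRun (extend d ω) u w) :
    (monoSubgraph (pathGraph n) ω).Reachable u w := by
  obtain ⟨w, hw⟩ := w
  simp only [Fin.le_def] at hle
  induction w, hle using Nat.le_induction with
  | base => rfl
  | succ k hk ih =>
    have hk' : SameRun (extend d ω) u k := h.mono (by omega) (by simp only; omega)
    refine (ih (by omega) hk').trans (Adj.reachable ⟨by simp [pathGraph_adj], ?_⟩)
    have hcol := (hk'.symm.trans h).apply_eq
    rw [extend_of_lt (by omega), extend_of_lt (by omega)] at hcol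
    exact hcol.symm

theorem reachable_monoSubgraph_pathGraph_iff (u w : Fin n) :
    (monoSubgraph (pathGraph n) ω).Reachable u w ↔ SameRun (extend d ω) u w := by
  refine ⟨fun h => ?_, fun h => ?_⟩
  · rw [reachable_iff_reflTransGen] at h
    induction h with
    | refl => exact SameRun.refl _ _
    | tail _ hadj ih => exact ih.trans (sameRun_of_adj hadj)
  · rcases le_total u w with hle | hle
    · exact reachable_of_sameRun hle h
    · exact (reachable_of_sameRun hle h.symm).symm

end Path

theorem exists_isMaximalRun_extend_floodMove {n : ℕ} (d : C) (ω : Fin n → C) (v : Fin n) (b : C) :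
    ∃ ℓ r, IsMaximalRun n (extend d ω) ℓ r ∧
      extend d (floodMove (pathGraph n) ω v b) = recolour (extend d ω) ℓ r b := by
  obtain ⟨ℓ, r, hK, hrun⟩ := exists_isMaximalRun (extend d ω) v.isLt
  refine ⟨ℓ, r, hK, funext fun z => ?_⟩
  by_cases hz : z < n
  · rw [extend_of_lt hz, recolour, floodMove]
    simp only [reachable_monoSubgraph_pathGraph_iff (d := d), ← hrun, hz, true_and]
    split_ifs <;> simp [extend_of_lt hz]
  · rw [recolour_of_not_mem (by have := hK.lt; omega), extend, extend, dif_neg hz, dif_neg hz]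

theorem exists_isLinkage_of_floodSeq {n : ℕ} (d : C) : ∀ (ms : List (Fin n × C)) (ω : Fin n → C),
    (∀ v, floodSeq (pathGraph n) ms ω v = d) →
    ∃ S part, IsLinkage n (extend d ω) S part ∧
      (boundaries n (extend d ω)).card + (S.image part).card ≤ ms.length + S.card
  | [], ω, h => ⟨∅, id, IsLinkage.empty, by
      rw [boundaries_eq_empty (d := d) fun i hi => by rw [extend_of_lt hi]; exact h _]
      simp⟩
  | (v, b) :: ms, ω, h => by
    obtain ⟨ℓ, r, hK, hmove⟩ := exists_isMaximalRun_extend_floodMove d ω v b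
    obtain ⟨S, part, hL, hS⟩ := exists_isLinkage_of_floodSeq d ms _ h
    rw [hmove] at hL hS
    obtain ⟨T, part', hT, hstep⟩ := hK.exists_isLinkage_of_recolour b hL
    exact ⟨T, part', hT, by rw [List.length_cons]; omega⟩

section Cost

variable {V : Type*} {G : SimpleGraph V} {ω : V → C} {d : C} {k : ℕ}

theorem floodSeq_map_eq (G : SimpleGraph V) (d : C) : ∀ (l : List V) (ω : V → C) (v : V),
    v ∈ l ∨ ω v = d → floodSeq G (l.map fun u => (u, d)) ω v = d
  | [], _, _, h => h.resolve_left List.not_mem_nil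
  | a :: l, ω, v, h => by
    refine floodSeq_map_eq G d l _ v ?_
    rcases h with h | h
    · rcases List.mem_cons.1 h with rfl | h
      · exact Or.inr (if_pos (Reachable.refl _))
      · exact Or.inl h
    · right
      unfold floodMove
      split_ifs
      · rfl
      · exact h

theorem le_floodCost [Fintype V]
    (h : ∀ ms : List (V × C), (∀ v, floodSeq G ms ω v = d) → k ≤ ms.length) :
    k ≤ floodCost G ω d :=
  le_csInf ⟨_, _, rfl, fun v => floodSeq_map_eq G d Finset.univ.toList ω v
      (Or.inl (Finset.mem_toList.2 (Finset.mem_univ v)))⟩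
    fun _ ⟨ms, hlen, hms⟩ => hlen ▸ h ms hms

theorem le_floodCostMin [Nonempty C] (h : ∀ d, k ≤ floodCost G ω d) : k ≤ floodCostMin G ω :=
  le_csInf (Set.range_nonempty _) fun _ ⟨d, hd⟩ => hd ▸ h d

end Cost

end FloodIt

namespace IsShiftedRainbow

open FloodIt

variable {C : Type*} {c r n : ℕ} {ω : Fin n → C}

theorem dvd_sub (h : IsShiftedRainbow c r ω)
    {i j : Fin n} (hij : i ≤ j) (hω : ω i = ω j) : c ∣ (j : ℕ) - i := by
  obtain ⟨e, he, hωe⟩ := h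
  rw [hωe i, hωe j] at hω
  have := he.1 hω
  push_cast at this
  rw [← CharP.cast_eq_zero_iff (ZMod c), Nat.cast_sub (R := ZMod c) hij]
  linear_combination -this

theorem card_boundaries_extend (h : IsShiftedRainbow c r ω) (hc : 2 ≤ c) (d : C) :
    (boundaries n (extend d ω)).card = n - 1 := by
  rw [boundaries_eq_range fun i hi hcol => ?_, Finset.card_range]
  rw [extend_of_lt (by omega), extend_of_lt hi] at hcol
  have hdvd : c ∣ (i + 1) - i := h.dvd_sub (Fin.mk_le_mk.2 i.le_succ) hcol
  rw [Nat.add_sub_cancel_left] at hdvd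
  have := Nat.le_of_dvd one_pos hdvd
  omega

theorem card_sub_card_image_le (h : IsShiftedRainbow c r ω) (hc : 0 < c) {d : C}
    {S : Finset ℕ} {part : ℕ → ℕ} (hL : IsLinkage n (extend d ω) S part) :
    S.card - (S.image part).card ≤ (n - 1) / c := by
  have hcount := hL.nonCrossing.mul_card_le (c := c) (a := 0) (b := n - 1)
    (fun x hx y hy hxy hp => ?_) fun x hx => ⟨Nat.zero_le _, by have := hL.lt x hx; omega⟩
  · rw [Nat.le_div_iff_mul_le hc, Nat.sub_mul, mul_comm, mul_comm _ c]
    omega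
  · have hcol := hL.apply_eq x hx y hy hp
    rw [extend_of_lt (hL.lt x hx), extend_of_lt (hL.lt y hy)] at hcol
    exact h.dvd_sub (Fin.mk_le_mk.2 hxy) hcol

end IsShiftedRainbow

theorem shiftedRainbow_floodCostMin_ge_general {C : Type*} (n c r : ℕ) (hc : 2 ≤ c)
    (ω : Fin n → C) (h : IsShiftedRainbow c r ω) :
    n - (n + c - 1) / c ≤ floodCostMin (SimpleGraph.pathGraph n) ω := by
  rcases Nat.eq_zero_or_pos n with rfl | hn
  · simp
  have : Nonempty C := ⟨ω ⟨0, hn⟩⟩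
  refine FloodIt.le_floodCostMin fun d => FloodIt.le_floodCost fun ms hms => ?_
  obtain ⟨S, part, hL, hpot⟩ := FloodIt.exists_isLinkage_of_floodSeq d ms ω hms
  have hD := h.card_boundaries_extend hc d
  have hS := h.card_sub_card_image_le (by omega) hL
  have : (n + c - 1) / c = (n - 1) / c + 1 := by
    rw [show n + c - 1 = n - 1 + c by omega, Nat.add_div_right _ (by omega)]
  omega

/-- If `ω` is an `r`-shifted `C`-rainbow colouring of the path `P` on `n` vertices, where
`|C| = c ≥ 2` and `r ∈ {0, …, n-1}`, then `m(P, ω) ≥ n - ⌈n / c⌉`. -/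
theorem shiftedRainbow_floodCostMin_ge {C : Type*} (n c r : ℕ) (hc : 2 ≤ c) (hr : r < n)
    (ω : Fin n → C) (h : IsShiftedRainbow c r ω) :
    n - (n + c - 1) / c ≤ floodCostMin (SimpleGraph.pathGraph n) ω :=
  shiftedRainbow_floodCostMin_ge_general n c r hc ω h
end

section
/- Let G be a cycle on n vertices and let ω be a C-rainbow colouring of G, for some colour-set C with |C| = c ≥ 2. Then m(G,ω) ≥ n − ⌈n/c⌉. -/
open Classical SimpleGraph

/-!
Read a flooding sequence backwards, tracking a labelling of the vertices whose classes are
monochromatic and pairwise non-crossing. A labelling valid after a move gives one valid before it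
with at most one more label, by giving the flooded monochromatic component a fresh label: that
component is an arc of the cycle, so it crosses no other class. The final constant colouring has
a one-label labelling, so `k` moves give a labelling of `ω` with at most `k + 1` labels.

For a rainbow colouring, consecutive members of a class lie a positive multiple of `c` apart, and
the intervals they span are pairwise nested or interior-disjoint; such a family inside
`[0, n - 1]` has at most `(n - 1) / c` members. Hence there are at least `n - ⌈n / c⌉ + 1` labels.
-/

open Finset

variable {n : ℕ}

section Flooding

variable {V C : Type*} {G : SimpleGraph V} {ω : V → C} {d : C}

theorem monoSubgraph_le : monoSubgraph G ω ≤ G :=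
  fun _ _ h => h.1

theorem SimpleGraph.Reachable.apply_eq_of_monoSubgraph {x y : V}
    (h : (monoSubgraph G ω).Reachable x y) : ω x = ω y := by
  obtain ⟨p⟩ := h
  induction p with
  | nil => rfl
  | cons h _ ih => exact h.2.trans ih

theorem floodSeq_map_eq (l : List V) {u : V} (hu : u ∈ l ∨ ω u = d) :
    floodSeq G (l.map (·, d)) ω u = d := by
  induction l generalizing ω with
  | nil => simpa [floodSeq] using hu
  | cons v vs ih =>
    refine ih (or_iff_not_imp_left.mpr fun huvs => ?_)
    simp only [List.mem_cons, huvs, or_false] at hu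
    unfold floodMove
    split_ifs with hvu
    · rfl
    · rcases hu with rfl | hu
      exacts [(hvu .rfl).elim, hu]

theorem le_floodCost [Fintype V] {k : ℕ}
    (h : ∀ ms : List (V × C), (∀ u, floodSeq G ms ω u = d) → k ≤ ms.length) :
    k ≤ floodCost G ω d := by
  refine le_csInf ⟨_, _, rfl, fun u =>
    floodSeq_map_eq univ.toList (.inl (mem_toList.mpr (mem_univ u)))⟩ ?_
  rintro _ ⟨ms, rfl, hms⟩
  exact h ms hms

theorem le_floodCostMin_s9 [Nonempty C] {k : ℕ} (h : ∀ d, k ≤ floodCost G ω d) :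
    k ≤ floodCostMin G ω := by
  refine le_csInf ⟨_, Classical.arbitrary C, rfl⟩ ?_
  rintro _ ⟨d, rfl⟩
  exact h d

end Flooding

section Noncrossing

variable {α : Type*} [LinearOrder α]

def IsNoncrossing {β : Type*} (f : α → β) : Prop :=
  ∀ a b a' b', a < b → b < a' → a' < b' → f a = f a' → f b = f b' → f a = f b

theorem IsNoncrossing.ite {p : α → Prop} [DecidablePred p] {f : α → ℕ} (hp : IsNoncrossing p)
    (hf : IsNoncrossing f) : IsNoncrossing fun u => if p u then 0 else f u + 1 := by
  intro a b a' b' hab hba' ha'b' ha hb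
  have hp' := hp a b a' b' hab hba' ha'b'
  have hf' := hf a b a' b' hab hba' ha'b'
  by_cases p a <;> by_cases p a' <;> by_cases p b <;> by_cases p b' <;> simp_all

structure IsNoncrossingMonoLabelling {C : Type*} (ω : α → C) (f : α → ℕ) : Prop where
  mono : ∀ x y, f x = f y → ω x = ω y
  noncrossing : IsNoncrossing f

end Noncrossing

theorem Fin.val_eq_add_one_of_sub_eq_one {u w : Fin n} (h : (u - w).val = 1) :
    u.val = w.val + 1 ∨ (u.val = 0 ∧ w.val + 1 = n) := by
  rw [Fin.sub_def] at h
  simp only at h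
  have := u.isLt
  rcases lt_or_ge (n - w + u) n with hlt | hge
  · rw [Nat.mod_eq_of_lt hlt] at h; omega
  · rw [Nat.mod_eq_sub_mod hge, Nat.mod_eq_of_lt (by omega)] at h; omega

theorem cycleGraph_adj_mem_Ioo {u w b₁ b₂ : Fin n} (h : (cycleGraph n).Adj u w)
    (hu : u ∈ Set.Ioo b₁ b₂) (hw₁ : w ≠ b₁) (hw₂ : w ≠ b₂) : w ∈ Set.Ioo b₁ b₂ := by
  rw [cycleGraph_adj'] at h
  have := b₂.isLt
  simp only [Set.mem_Ioo, Fin.lt_def, ne_eq, Fin.ext_iff] at *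
  rcases h with h | h <;> rcases Fin.val_eq_add_one_of_sub_eq_one h with h | h <;> omega

theorem mem_Ioo_iff_of_reachable {H : SimpleGraph (Fin n)} (hH : H ≤ cycleGraph n)
    {a a' b₁ b₂ : Fin n} (h : H.Reachable a a') (h₁ : ¬H.Reachable a b₁)
    (h₂ : ¬H.Reachable a b₂) : a ∈ Set.Ioo b₁ b₂ ↔ a' ∈ Set.Ioo b₁ b₂ := by
  obtain ⟨p⟩ := h
  induction p with
  | nil => rfl
  | @cons u w _ huw p ih =>
    have hw₁ : ¬H.Reachable w b₁ := fun hw => h₁ (huw.reachable.trans hw)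
    have hw₂ : ¬H.Reachable w b₂ := fun hw => h₂ (huw.reachable.trans hw)
    have ne {x y : Fin n} (hx : ¬H.Reachable x y) : x ≠ y := by rintro rfl; exact hx .rfl
    rw [← ih hw₁ hw₂]
    exact ⟨fun hu => cycleGraph_adj_mem_Ioo (hH huw) hu (ne hw₁) (ne hw₂),
      fun hw => cycleGraph_adj_mem_Ioo (hH huw.symm) hw (ne h₁) (ne h₂)⟩

theorem isNoncrossing_reachable {H : SimpleGraph (Fin n)} (hH : H ≤ cycleGraph n) (v : Fin n) :
    IsNoncrossing (H.Reachable v) := by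
  intro a b a' b' hab hba' ha'b' ha hb
  have key {x x' y y' : Fin n} (hx : H.Reachable v x) (hx' : H.Reachable v x')
      (hy : ¬H.Reachable v y) (hy' : ¬H.Reachable v y') :
      x ∈ Set.Ioo y y' ↔ x' ∈ Set.Ioo y y' :=
    mem_Ioo_iff_of_reachable hH (hx.symm.trans hx') (fun h => hy (hx.trans h))
      (fun h => hy' (hx.trans h))
  rw [eq_iff_iff] at ha hb ⊢
  by_cases hav : H.Reachable v a
  · refine iff_of_true hav (not_not.mp fun hbv => ?_)
    have := (key (ha.mp hav) hav hbv (hb.not.mp hbv)).mp ⟨hba', ha'b'⟩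
    exact (this.1.trans hab).false
  · refine iff_of_false hav fun hbv => ?_
    have := (key hbv (hb.mp hbv) hav (ha.not.mp hav)).mp ⟨hab, hba'⟩
    exact (this.2.trans ha'b').false

theorem IsNoncrossingMonoLabelling.of_floodMove {C : Type*} {ω : Fin n → C} {v : Fin n} {d : C}
    {f : Fin n → ℕ} (hf : IsNoncrossingMonoLabelling (floodMove (cycleGraph n) ω v d) f) :
    ∃ g, IsNoncrossingMonoLabelling ω g ∧ #(univ.image g) ≤ #(univ.image f) + 1 := by
  set M := monoSubgraph (cycleGraph n) ω
  refine ⟨fun u => if M.Reachable v u then 0 else f u + 1,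
    ⟨fun x y hxy => ?_, (isNoncrossing_reachable monoSubgraph_le v).ite hf.noncrossing⟩, ?_⟩
  · by_cases hx : M.Reachable v x <;> by_cases hy : M.Reachable v y <;> simp only [hx, hy,
      if_true, if_false, Nat.add_right_cancel_iff, reduceCtorEq] at hxy
    · exact hx.apply_eq_of_monoSubgraph.symm.trans hy.apply_eq_of_monoSubgraph
    · have := hf.mono x y hxy
      rwa [floodMove, floodMove, if_neg hx, if_neg hy] at this
  · calc #(univ.image _) ≤ #(insert 0 ((univ.image f).image (· + 1))) := by
          refine card_le_card fun l hl => ?_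
          obtain ⟨u, -, rfl⟩ := mem_image.mp hl
          by_cases hu : M.Reachable v u <;> simp [hu]
      _ ≤ #(univ.image f) + 1 := (card_insert_le _ _).trans (Nat.add_le_add_right card_image_le 1)

theorem exists_isNoncrossingMonoLabelling_of_floodSeq {C : Type*} {d : C} :
    ∀ (ms : List (Fin n × C)) {ω : Fin n → C}, (∀ u, floodSeq (cycleGraph n) ms ω u = d) →
      ∃ f, IsNoncrossingMonoLabelling ω f ∧ #(univ.image f) ≤ ms.length + 1
  | [], ω, h => ⟨fun _ => 0, ⟨fun x y _ => (h x).trans (h y).symm, fun _ _ _ _ _ _ _ _ _ => rfl⟩,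
      card_le_one.mpr fun _ ha _ hb => by simp_all⟩
  | m :: ms, ω, h => by
      obtain ⟨f, hf, hcard⟩ := exists_isNoncrossingMonoLabelling_of_floodSeq ms h
      obtain ⟨g, hg, hgcard⟩ := hf.of_floodMove
      exact ⟨g, hg, by simp only [List.length_cons]; omega⟩

section Intervals

variable {α : Type*} [LinearOrder α]

def NestedOrInteriorDisjoint (p q : α × α) : Prop :=
  p.2 ≤ q.1 ∨ q.2 ≤ p.1 ∨ (p.1 < q.1 ∧ q.2 < p.2) ∨ (q.1 < p.1 ∧ p.2 < q.2)

theorem NestedOrInteriorDisjoint.symm {p q : α × α}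
    (h : NestedOrInteriorDisjoint p q) : NestedOrInteriorDisjoint q p := by
  unfold NestedOrInteriorDisjoint at *; tauto

theorem NestedOrInteriorDisjoint.map {β : Type*} [LinearOrder β] {φ : α → β}
    (hφ : StrictMono φ) {p q : α × α} (h : NestedOrInteriorDisjoint p q) :
    NestedOrInteriorDisjoint (Prod.map φ φ p) (Prod.map φ φ q) := by
  unfold NestedOrInteriorDisjoint at *
  simp only [Prod.map_fst, Prod.map_snd, hφ.le_iff_le, hφ.lt_iff_lt]
  exact h

end Intervals

theorem mul_card_le_of_pairwise_nestedOrInteriorDisjoint {c : ℕ} {I : Finset (ℕ × ℕ)}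
    (hI : (I : Set (ℕ × ℕ)).Pairwise NestedOrInteriorDisjoint)
    (hdvd : ∀ p ∈ I, p.1 < p.2 ∧ c ∣ p.2 - p.1) {L R : ℕ} (hLR : ∀ p ∈ I, L ≤ p.1 ∧ p.2 ≤ R) :
    c * #I ≤ R - L := by
  induction I using Finset.strongInduction generalizing L R with | H I ih =>
  obtain rfl | hne := I.eq_empty_or_nonempty
  · simp
  obtain ⟨⟨u, v⟩, hp, hmin⟩ := I.exists_min_image Prod.fst hne
  set J := I.erase (u, v)
  have hJ : ∀ q ∈ J, (u < q.1 ∧ q.2 < v) ∨ v ≤ q.1 := by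
    intro q hq
    have := hI hp (erase_subset _ _ hq) (ne_of_mem_erase hq).symm
    have := hdvd q (erase_subset _ _ hq)
    have := hmin q (erase_subset _ _ hq)
    simp only [NestedOrInteriorDisjoint] at *
    omega
  have hsub {K : Finset (ℕ × ℕ)} (hK : K ⊆ J) : K ⊂ I :=
    hK.trans_ssubset (erase_ssubset hp)
  have hsub' {K : Finset (ℕ × ℕ)} (hK : K ⊆ J) : K ⊆ I := (hsub hK).subset
  have hin : c * #(J.filter (·.1 < v)) ≤ (v - 1) - (u + 1) :=
    ih _ (hsub (filter_subset _ _)) (hI.mono (hsub' (filter_subset _ _)))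
      (fun q hq => hdvd q (hsub' (filter_subset _ _) hq)) fun q hq => by
        rw [mem_filter] at hq; have := hJ q hq.1; omega
  have hout : c * #(J.filter (¬·.1 < v)) ≤ R - v :=
    ih _ (hsub (filter_subset _ _)) (hI.mono (hsub' (filter_subset _ _)))
      (fun q hq => hdvd q (hsub' (filter_subset _ _) hq)) fun q hq => by
        rw [mem_filter] at hq; have := hLR q (erase_subset _ _ hq.1); omega
  obtain ⟨huv, hc⟩ := hdvd _ hp
  -- `c * #(nested intervals)` and `v - u` are multiples of `c`, and the former is smaller
  have hin' : c * #(J.filter (·.1 < v)) + c ≤ v - u :=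
    Nat.le_of_lt_add_of_dvd (by omega) (dvd_add (dvd_mul_right _ _) dvd_rfl) hc
  have hcard : #I = #(J.filter (·.1 < v)) + #(J.filter (¬·.1 < v)) + 1 := by
    rw [card_filter_add_card_filter_not, card_erase_add_one hp]
  obtain ⟨hLu, hvR⟩ : L ≤ u ∧ v ≤ R := hLR _ hp
  rw [hcard, mul_add, mul_add, mul_one]
  omega

section ConsecutivePairs

variable {α β : Type*} [LinearOrder α] [Fintype α] [DecidableEq β]

def consecutivePairs (f : α → β) : Finset (α × α) :=
  univ.filter fun p => p.1 < p.2 ∧ f p.1 = f p.2 ∧ ∀ z, p.1 < z → z < p.2 → f z ≠ f p.1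

theorem card_le_card_consecutivePairs_add_card_image (f : α → β) :
    Fintype.card α ≤ #(consecutivePairs f) + #(univ.image f) := by
  set S := univ.filter fun y => ∃ x < y, f x = f y
  have hS : #S ≤ #(consecutivePairs f) := by
    refine (card_le_card fun y hy => ?_).trans (card_image_le (f := Prod.snd))
    obtain ⟨x₀, hx₀y, hx₀⟩ := (mem_filter.mp hy).2
    set T := univ.filter fun x => x < y ∧ f x = f y
    have hT : T.Nonempty := ⟨x₀, by simp [T, hx₀y, hx₀]⟩
    obtain ⟨hxy, hfxy⟩ := (mem_filter.mp (T.max'_mem hT)).2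
    refine mem_image.mpr ⟨(T.max' hT, y), mem_filter.mpr ⟨mem_univ _, hxy, hfxy, ?_⟩, rfl⟩
    intro z hxz hzy hfz
    exact (T.le_max' z (by simp [T, hzy, hfz, hfxy])).not_gt hxz
  have hSc : #(univ.filter fun y => ¬∃ x < y, f x = f y) ≤ #(univ.image f) := by
    refine card_le_card_of_injOn f (fun y _ => by simp) fun y hy y' hy' hyy' => ?_
    simp only [coe_filter, mem_univ, true_and, Set.mem_ofPred_eq, not_exists, not_and] at hy hy'
    rcases lt_trichotomy y y' with h | h | h
    exacts [(hy' y h hyy').elim, h, (hy y' h hyy'.symm).elim]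
  rw [← card_univ, ← card_filter_add_card_filter_not fun y => ∃ x < y, f x = f y]
  exact add_le_add hS hSc

theorem IsNoncrossing.pairwise_consecutivePairs {f : α → β} (hf : IsNoncrossing f) :
    (consecutivePairs f : Set (α × α)).Pairwise NestedOrInteriorDisjoint := by
  rintro ⟨x, y⟩ hp ⟨x', y'⟩ hq hne
  simp only [consecutivePairs, coe_filter, mem_univ, true_and, Set.mem_ofPred_eq] at hp hq
  wlog hxx' : x ≤ x' generalizing x y x' y'
  · exact (this x' y' x y hne.symm hq hp (le_of_not_ge hxx')).symm
  obtain ⟨hxy, hfxy, hbtw⟩ := hp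
  obtain ⟨hxy', hfxy', hbtw'⟩ := hq
  unfold NestedOrInteriorDisjoint
  by_contra! h
  obtain rfl | hxx' := hxx'.eq_or_lt
  · rcases lt_trichotomy y y' with hyy' | rfl | hyy'
    · exact hbtw' y h.1 hyy' hfxy.symm
    · exact hne rfl
    · exact hbtw y' h.2.1 hyy' hfxy'.symm
  · have hfx' : f x' ≠ f x := hbtw x' hxx' h.1
    obtain rfl | hyy' := (h.2.2.1 hxx').eq_or_lt
    · exact hfx' (hfxy'.trans hfxy.symm)
    · exact hfx' (hf x x' y y' hxx' h.1 hyy' hfxy hfxy').symm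

end ConsecutivePairs

theorem IsShiftedRainbow.dvd_sub_s9 {C : Type*} {c r : ℕ} {ω : Fin n → C}
    (hω : IsShiftedRainbow c r ω) {x y : Fin n} (h : ω x = ω y) : c ∣ y.val - x.val := by
  obtain ⟨e, he, hωe⟩ := hω
  rw [hωe, hωe] at h
  have := Nat.sub_mod_eq_zero_of_mod_eq
    ((ZMod.natCast_eq_natCast_iff' _ _ c).mp (sub_left_inj.mp (he.1 h))).symm
  rw [Nat.add_sub_add_right] at this
  exact Nat.dvd_of_mod_eq_zero this

theorem IsShiftedRainbow.sub_ceil_div_le_card_image_sub_one {C : Type*} {c r : ℕ} (hc : 0 < c)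
    {ω : Fin n → C} (hω : IsShiftedRainbow c r ω) {f : Fin n → ℕ}
    (hf : IsNoncrossingMonoLabelling ω f) : n - (n + c - 1) / c ≤ #(univ.image f) - 1 := by
  set I := (consecutivePairs f).image (Prod.map Fin.val Fin.val)
  have hinj : Function.Injective (Prod.map (Fin.val (n := n)) Fin.val) :=
    (Fin.val_injective (n := n)).prodMap (Fin.val_injective (n := n))
  have hI : c * #I ≤ n - 1 := by
    refine (mul_card_le_of_pairwise_nestedOrInteriorDisjoint (L := 0) ?_ ?_ ?_).trans_eq
      (Nat.sub_zero _)
    · rw [coe_image, hinj.injOn.pairwise_image]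
      exact hf.noncrossing.pairwise_consecutivePairs.mono' fun p q h => h.map Fin.val_strictMono
    · simp only [I, mem_image, consecutivePairs, mem_filter]
      rintro _ ⟨p, ⟨-, hp, hfp, -⟩, rfl⟩
      exact ⟨hp, hω.dvd_sub_s9 (hf.mono _ _ hfp)⟩
    · simp only [I, mem_image]
      rintro _ ⟨p, -, rfl⟩
      exact ⟨Nat.zero_le _, Nat.le_sub_one_of_lt p.2.isLt⟩
  have hpairs : n ≤ #I + #(univ.image f) := by
    simpa [I, card_image_of_injective _ hinj] using card_le_card_consecutivePairs_add_card_image f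
  obtain rfl | hn := Nat.eq_zero_or_pos n
  · simp
  suffices (n - (#(univ.image f) - 1)) * c ≤ n + c - 1 by
    rw [← Nat.le_div_iff_mul_le hc] at this; omega
  calc (n - (#(univ.image f) - 1)) * c ≤ c * #I + c := by
        rw [mul_comm, ← mul_add_one]; exact Nat.mul_le_mul_left c (by omega)
    _ ≤ n + c - 1 := by omega

theorem rainbow_cycle_floodCostMin_ge_general {C : Type*} (n c : ℕ) (hc : 2 ≤ c)
    (ω : Fin n → C) (h : ∃ r, r < n ∧ IsShiftedRainbow c r ω) :
    n - (n + c - 1) / c ≤ floodCostMin (SimpleGraph.cycleGraph n) ω := by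
  obtain ⟨r, -, hω⟩ := h
  have : Nonempty C := ⟨hω.choose 0⟩
  refine le_floodCostMin_s9 fun d => le_floodCost fun ms hms => ?_
  obtain ⟨f, hf, hcard⟩ := exists_isNoncrossingMonoLabelling_of_floodSeq ms hms
  have := hω.sub_ceil_div_le_card_image_sub_one (by omega) hf
  omega

/-- If `ω` is a `C`-rainbow colouring of the cycle `G` on `n` vertices (i.e. `ω` is an
`r`-shifted `C`-rainbow colouring, for some `r`, of the path obtained by deleting one
edge of the cycle), where `|C| = c ≥ 2`, then `m(G, ω) ≥ n - ⌈n / c⌉`. -/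
theorem rainbow_cycle_floodCostMin_ge {C : Type*} (n c : ℕ) (hn : 3 ≤ n) (hc : 2 ≤ c)
    (ω : Fin n → C) (h : ∃ r, r < n ∧ IsShiftedRainbow c r ω) :
    n - (n + c - 1) / c ≤ floodCostMin (SimpleGraph.cycleGraph n) ω :=
  rainbow_cycle_floodCostMin_ge_general n c hc ω h
end

section
/- Let G be a blow-up of the path P_t, and let ω be a C-rainbow colouring of G with |C| = c ≥ 2. If t ≥ c + 2, then m(G,ω) ≤ t − ⌈t/c⌉. -/
/-!
Flood repeatedly from one vertex `w` of class `i = ⌈t/c⌉ - 1`, always with the next colour of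
the rainbow. The component of `w` gains a class to the right at every move, but a class to the
left only every `c - 1` moves, when the colours have come round again. Writing `κ j` for the
colour `j` steps after that of `w` and `T v` for the move at which `v` joins the component, the
colouring after `k` moves is `v ↦ κ (max (T v) k)`; the choice of `i` balances the two sides so
that `T ≤ t - ⌈t/c⌉` everywhere.
-/

open Classical SimpleGraph

section Flooding

variable {V C : Type*} {G : SimpleGraph V}

theorem floodSeq_map_range' (σ : ℕ → V → C) (w : V) (d : ℕ → C)
    (h : ∀ k, floodMove G (σ k) w (d k) = σ (k + 1)) (k n : ℕ) :
    floodSeq G ((List.range' k n).map fun j => (w, d j)) (σ k) = σ (k + n) := by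
  induction n generalizing k with
  | zero => rfl
  | succ n ih =>
    simp only [List.range'_succ, List.map_cons, floodSeq, h, ih]
    rw [Nat.add_right_comm, Nat.add_assoc]

theorem floodCost_le_length {ω : V → C} {d : C} (ms : List (V × C))
    (h : ∀ v, floodSeq G ms ω v = d) : floodCost G ω d ≤ ms.length :=
  Nat.sInf_le ⟨ms, rfl, h⟩

theorem floodCostMin_le_floodCost (ω : V → C) (d : C) : floodCostMin G ω ≤ floodCost G ω d :=
  Nat.sInf_le ⟨d, rfl⟩

/-- `T v` is meant as the move at which `v` joins the monochromatic component of `w` when `w` is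
flooded through a `c`-periodic sequence of colours; `lt_add_of_adj` keeps the component from
absorbing a vertex before its time. -/
structure IsAbsorptionTime (G : SimpleGraph V) (c : ℕ) (w : V) (T : V → ℕ) : Prop where
  root : T w = 0
  exists_adj_lt : ∀ v, v ≠ w → ∃ u, G.Adj u v ∧ T u < T v
  lt_add_of_adj : ∀ ⦃u v⦄, G.Adj u v → T v < T u + c

namespace IsAbsorptionTime

variable {c : ℕ} {w : V} {T : V → ℕ} {κ : ℕ → C}

theorem reachable_iff (hT : IsAbsorptionTime G c w T) (hκ : ∀ a b, κ a = κ b → a ≡ b [MOD c])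
    (k : ℕ) (v : V) :
    (monoSubgraph G fun x => κ (max (T x) k)).Reachable w v ↔ T v ≤ k := by
  constructor
  · rintro ⟨q⟩
    have closed : ∀ ⦃x y⦄, (monoSubgraph G fun x => κ (max (T x) k)).Adj x y →
        T x ≤ k → T y ≤ k := by
      rintro x y ⟨hxy, hcol⟩ hx
      by_contra! hy
      dsimp only at hcol
      rw [max_eq_right hx, max_eq_left hy.le] at hcol
      have hdvd := (Nat.modEq_iff_dvd' hy.le).1 (hκ _ _ hcol)
      have := Nat.le_of_dvd (Nat.sub_pos_of_lt hy) hdvd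
      have := hT.lt_add_of_adj hxy
      omega
    have walk : ∀ {x y}, (monoSubgraph G fun x => κ (max (T x) k)).Walk x y →
        T x ≤ k → T y ≤ k := by
      intro x y q
      induction q with
      | nil => exact id
      | cons hxy _ ih => exact fun hx => ih (closed hxy hx)
    exact walk q (hT.root ▸ Nat.zero_le k)
  · intro hv
    induction hTv : T v using Nat.strong_induction_on generalizing v with
    | _ n ih =>
      by_cases hvw : v = w
      · exact hvw ▸ Reachable.refl v
      obtain ⟨u, huv, hu⟩ := hT.exists_adj_lt v hvw
      refine (ih (T u) (hTv ▸ hu) u (by omega) rfl).trans (Adj.reachable ⟨huv, ?_⟩)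
      dsimp only
      rw [max_eq_right (by omega), max_eq_right hv]

theorem floodCost_le (hT : IsAbsorptionTime G c w T) (hκ : ∀ a b, κ a = κ b → a ≡ b [MOD c])
    (n : ℕ) (hn : ∀ v, T v ≤ n) : floodCost G (κ ∘ T) (κ n) ≤ n := by
  have step : ∀ k, floodMove G (fun x => κ (max (T x) k)) w (κ (k + 1)) =
      fun x => κ (max (T x) (k + 1)) := by
    intro k
    funext v
    simp only [floodMove, hT.reachable_iff hκ]
    split_ifs with h
    · rw [max_eq_right (by omega)]
    · rw [max_eq_left (by omega : k ≤ T v), max_eq_left (by omega : k + 1 ≤ T v)]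
  have hrun := floodSeq_map_range' (fun k x => κ (max (T x) k)) w (fun j => κ (j + 1)) step 0 n
  simp only [max_zero, zero_add] at hrun
  calc floodCost G (κ ∘ T) (κ n)
      ≤ ((List.range' 0 n).map fun j => (w, κ (j + 1))).length :=
        floodCost_le_length _ fun v => (congrFun hrun v).trans (by rw [max_eq_right (hn v)])
    _ = n := by simp

end IsAbsorptionTime

end Flooding

section PathBlowup

/-- Flooding from a vertex of class `i`, class `i + d` joins after `d` moves, class `i - d` after
`d * (c - 1)` moves, and the rest of class `i` after `c` moves. -/
def pathTime (c i j : ℕ) : ℕ :=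
  if i < j then j - i else if j = i then c else (i - j) * (c - 1)

variable {c i j j' t : ℕ}

theorem pathTime_spec (c i j : ℕ) :
    (i < j → pathTime c i j = j - i) ∧ (j = i → pathTime c i j = c) ∧
      (j + 1 = i → pathTime c i j = c - 1) ∧
      (j + 1 < i → pathTime c i j = pathTime c i (j + 1) + (c - 1)) := by
  unfold pathTime
  refine ⟨fun h => if_pos h, fun h => by simp [h], fun h => ?_, fun h => ?_⟩
  · rw [if_neg (by omega), if_neg (by omega), show i - j = 1 by omega, one_mul]
  · rw [if_neg (by omega), if_neg (by omega), if_neg (by omega), if_neg (by omega),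
      show i - j = i - (j + 1) + 1 by omega, add_one_mul]

theorem pathTime_modEq (hc : 0 < c) (j : ℕ) : j + 1 ≡ i + 1 + pathTime c i j [MOD c] := by
  unfold pathTime
  split_ifs with hij hji
  · rw [show i + 1 + (j - i) = j + 1 by omega]
  · rw [hji, Nat.ModEq, Nat.add_mod_right]
  · have := Nat.le_mul_of_pos_right (i - j) hc
    rw [Nat.mul_sub_one, show i + 1 + ((i - j) * c - (i - j)) = j + 1 + (i - j) * c by omega,
      Nat.ModEq, Nat.add_mul_mod_self_right]

theorem pathTime_pos (hc : 2 ≤ c) : 0 < pathTime c i j := by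
  have := pathTime_spec c i j
  omega

theorem pathTime_lt_of_adj_root (hc : 2 ≤ c) (h : i + 1 = j ∨ j + 1 = i) :
    pathTime c i j < c := by
  have := pathTime_spec c i j
  omega

theorem pathTime_lt_add_of_adj (hc : 2 ≤ c) (h : j + 1 = j' ∨ j' + 1 = j) :
    pathTime c i j' < pathTime c i j + c := by
  rcases h with rfl | rfl
  · have := pathTime_spec c i j
    have := pathTime_spec c i (j + 1)
    omega
  · have := pathTime_spec c i j'
    have := pathTime_spec c i (j' + 1)
    omega

theorem exists_adj_pathTime_lt (hc : 2 ≤ c) (hi : i + 1 < t) (hj : j < t) (h₁ : i + 1 ≠ j)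
    (h₂ : j + 1 ≠ i) :
    ∃ j' < t, j' ≠ i ∧ (j' + 1 = j ∨ j + 1 = j') ∧ pathTime c i j' < pathTime c i j := by
  have := pathTime_spec c i j
  rcases lt_or_ge i j with hij | hij
  · have := pathTime_spec c i (j - 1)
    exact ⟨j - 1, by omega, by omega, by omega, by omega⟩
  · have := pathTime_spec c i (j + 1)
    exact ⟨j + 1, by omega, by omega, by omega, by omega⟩

theorem pathTime_le_sub (hc : 0 < c) (hci : c * i < t) (hict : i + 1 + c ≤ t) (hj : j < t) :
    pathTime c i j ≤ t - (i + 1) := by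
  unfold pathTime
  split_ifs
  · omega
  · omega
  · have := Nat.mul_le_mul_right (c - 1) (Nat.sub_le i j)
    have := Nat.mul_sub_one i c
    have := Nat.le_mul_of_pos_right i hc
    have := Nat.mul_comm c i
    omega

variable {W : Type*} {G : SimpleGraph W} {p : W → Fin t} {w v : W}

noncomputable def blowupTime (c i : ℕ) (p : W → Fin t) (w v : W) : ℕ :=
  if v = w then 0 else pathTime c i (p v)

theorem blowupTime_le_pathTime : blowupTime c i p w v ≤ pathTime c i (p v) := by
  unfold blowupTime
  split_ifs <;> omega

theorem blowupTime_modEq (hc : 0 < c) (hw : (p w : ℕ) = i) (v : W) :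
    (p v : ℕ) + 1 ≡ i + 1 + blowupTime c i p w v [MOD c] := by
  unfold blowupTime
  split_ifs with hvw
  · rw [hvw, hw]
  · exact pathTime_modEq hc _

theorem isAbsorptionTime_blowupTime (hc : 2 ≤ c) (hp : Function.Surjective p)
    (hadj : ∀ u v, G.Adj u v ↔ (pathGraph t).Adj (p u) (p v)) (hw : (p w : ℕ) = i)
    (hi : i + 1 < t) : IsAbsorptionTime G c w (blowupTime c i p w) where
  root := if_pos rfl
  exists_adj_lt v hvw := by
    have hv : blowupTime c i p w v = pathTime c i (p v) := if_neg hvw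
    by_cases hroot : i + 1 = p v ∨ (p v : ℕ) + 1 = i
    · refine ⟨w, (hadj w v).2 (pathGraph_adj.2 (hw ▸ hroot)), ?_⟩
      rw [hv, blowupTime, if_pos rfl]
      exact pathTime_pos hc
    obtain ⟨j', hj't, hj'i, hadj', hlt⟩ :=
      exists_adj_pathTime_lt hc hi (p v).isLt (by omega) (by omega)
    obtain ⟨u, hu⟩ := hp ⟨j', hj't⟩
    have hpu : (p u : ℕ) = j' := by rw [hu]
    have huw : u ≠ w := by
      rintro rfl
      omega
    refine ⟨u, (hadj u v).2 (pathGraph_adj.2 (hpu ▸ hadj')), ?_⟩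
    rw [hv, blowupTime, if_neg huw, hpu]
    exact hlt
  lt_add_of_adj u v huv := by
    have hpuv := pathGraph_adj.1 ((hadj u v).1 huv)
    refine blowupTime_le_pathTime.trans_lt ?_
    by_cases huw : u = w
    · subst huw
      rw [blowupTime, if_pos rfl, zero_add]
      exact pathTime_lt_of_adj_root hc (hw ▸ hpuv)
    · rw [blowupTime, if_neg huw]
      exact pathTime_lt_add_of_adj hc hpuv

end PathBlowup

theorem exists_add_pred_div_eq_succ {c t : ℕ} (hc : 2 ≤ c) (ht : c + 2 ≤ t) :
    ∃ i, (t + c - 1) / c = i + 1 ∧ c * i < t ∧ i + 1 + c ≤ t := by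
  have hs : 1 ≤ (t + c - 1) / c := (Nat.le_div_iff_mul_le (by omega)).2 (by omega)
  refine ⟨(t + c - 1) / c - 1, by omega, ?_⟩
  set i := (t + c - 1) / c - 1
  have hci : c * i < t := by
    have := Nat.mul_div_le (t + c - 1) c
    rw [show (t + c - 1) / c = i + 1 by omega, mul_add_one] at this
    omega
  refine ⟨hci, ?_⟩
  rcases Nat.lt_or_ge i 2 with hi | hi
  · omega
  · nlinarith

theorem rainbow_blowup_floodCostMin_le_general {W C : Type*} (G : SimpleGraph W)
    (t c : ℕ) (hc : 2 ≤ c) (ht : c + 2 ≤ t)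
    (p : W → Fin t) (hp : Function.Surjective p)
    (hadj : ∀ w₁ w₂ : W, G.Adj w₁ w₂ ↔ (SimpleGraph.pathGraph t).Adj (p w₁) (p w₂))
    (f : Fin t → C) (hf : IsShiftedRainbow c 0 f) :
    floodCostMin G (f ∘ p) ≤ t - (t + c - 1) / c := by
  obtain ⟨e, he, hfe⟩ := hf
  obtain ⟨i, hs, hci, hict⟩ := exists_add_pred_div_eq_succ hc ht
  obtain ⟨w, hw⟩ := hp ⟨i, by omega⟩
  have hpw : (p w : ℕ) = i := by rw [hw]
  let κ : ℕ → C := fun j => e ((i + 1 + j : ℕ) : ZMod c)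
  have hκ : ∀ a b, κ a = κ b → a ≡ b [MOD c] := fun a b h =>
    Nat.ModEq.add_left_cancel' _ ((ZMod.natCast_eq_natCast_iff _ _ _).1 (he.injective h))
  have hcol : f ∘ p = κ ∘ blowupTime c i p w := by
    funext v
    simp only [Function.comp_apply, hfe, Nat.cast_zero, sub_zero, κ]
    exact congrArg e ((ZMod.natCast_eq_natCast_iff _ _ _).2 (blowupTime_modEq (by omega) hpw v))
  rw [hs, hcol]
  calc floodCostMin G (κ ∘ blowupTime c i p w)
      ≤ floodCost G (κ ∘ blowupTime c i p w) (κ (t - (i + 1))) := floodCostMin_le_floodCost _ _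
    _ ≤ t - (i + 1) :=
      (isAbsorptionTime_blowupTime hc hp hadj hpw (by omega)).floodCost_le hκ _ fun v =>
        blowupTime_le_pathTime.trans (pathTime_le_sub (by omega) hci hict (p v).isLt)

/-- If `G` is a blow-up of the path `P_t` (via the class map `p`) and `ω = f ∘ p` is a
`C`-rainbow colouring of `G` (i.e. the induced colouring `f` of `P_t` is a `C`-rainbow,
that is `0`-shifted `C`-rainbow, colouring), with `|C| = c ≥ 2` and `t ≥ c + 2`, then
`m(G, ω) ≤ t - ⌈t / c⌉`. -/
theorem rainbow_blowup_floodCostMin_le {W C : Type*} [Fintype W] (G : SimpleGraph W)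
    (t c : ℕ) (hc : 2 ≤ c) (ht : c + 2 ≤ t)
    (p : W → Fin t) (hp : Function.Surjective p)
    (hadj : ∀ w₁ w₂ : W, G.Adj w₁ w₂ ↔ (SimpleGraph.pathGraph t).Adj (p w₁) (p w₂))
    (f : Fin t → C) (hf : IsShiftedRainbow c 0 f) :
    floodCostMin G (f ∘ p) ≤ t - (t + c - 1) / c :=
  rainbow_blowup_floodCostMin_le_general G t c hc ht p hp hadj f hf
end
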